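/- arXiv:1006.4923 — 14 statements merged into one kernel-verified Lean document; each statement's English description precedes it below -/
import Mathlib

section
/- Let V be a type of propositional variables and t ∉ V a fresh variable. Let H be a finite set of functions η : (V → Bool) → Bool → Bool, where the second argument represents the value substituted for a placeholder constant. Define the knowledge base Γ_⊤ := { σ ↦ η σ true : η ∈ H } over V (each placeholder read as ⊤), and the knowledge base Γ_t := { σ' ↦ η (σ' restricted to V) (σ' t) : η ∈ H } ∪ { σ' ↦ σ' t } over V ⊎ {t} (each placeholder read as the variable t, plus the unit formula t). Let A ⊆ V and let φ be a formula over V, extended to V ⊎ {t} by ignoring t. Then for every set E of literals over A: E is an explanation for (Γ_⊤, A, φ) if and only if E is an explanation for (Γ_t, A, φ). In particular, (Γ_⊤, A, φ) has an explanation iff (Γ_t, A, φ) has one, and (Γ_⊤, A, φ) has a positive explanation iff (Γ_t, A, φ) has one. -/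
/-- `σ` satisfies the knowledge base `Γ` (a set of formulas, each a Boolean function
on assignments). -/
def SatKB {V : Type*} (Γ : Set ((V → Bool) → Bool)) (σ : V → Bool) : Prop :=
  ∀ γ ∈ Γ, γ σ = true

/-- `σ` satisfies the set of literals given by positive part `P` and negative part `N`. -/
def SatLits {V : Type*} (σ : V → Bool) (P N : Set V) : Prop :=
  (∀ x ∈ P, σ x = true) ∧ (∀ x ∈ N, σ x = false)

/-- `(P, N)` is an explanation for the abduction instance `(Γ, A, φ)`. -/
def IsExplanation {V : Type*} (Γ : Set ((V → Bool) → Bool)) (A : Set V)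
    (φ : (V → Bool) → Bool) (P N : Set V) : Prop :=
  P ⊆ A ∧ N ⊆ A ∧ Disjoint P N ∧
    (∃ σ, SatKB Γ σ ∧ SatLits σ P N) ∧
    (∀ σ, SatKB Γ σ → SatLits σ P N → φ σ = true)

/-!
Reading each placeholder as the fresh variable `t` and adding the unit clause `t` forces
`t = ⊤` in every model, so the models of the new knowledge base, restricted to `V`, are exactly
the models of the old one. Explanations only mention literals over `V` and the manifestation
does not depend on `t`, so any abduction instance is unchanged by such a conservative
extension of the variables.
-/

open Set Function

def IsConservativeExtension {V W : Type*} (f : V → W) (Γ : Set ((V → Bool) → Bool))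
    (Γ' : Set ((W → Bool) → Bool)) : Prop :=
  ∀ σ, SatKB Γ σ ↔ ∃ σ', SatKB Γ' σ' ∧ σ' ∘ f = σ

theorem satLits_image_iff {V W : Type*} (f : V → W) (σ : W → Bool) (P N : Set V) :
    SatLits σ (f '' P) (f '' N) ↔ SatLits (σ ∘ f) P N := by
  simp only [SatLits, forall_mem_image, comp_apply]

section ConservativeExtension

variable {V W : Type*} {f : V → W} {Γ : Set ((V → Bool) → Bool)}
  {Γ' : Set ((W → Bool) → Bool)} {A : Set V} {φ : (V → Bool) → Bool}

theorem IsConservativeExtension.satKB_comp (hΓ : IsConservativeExtension f Γ Γ')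
    {σ' : W → Bool} (h : SatKB Γ' σ') : SatKB Γ (σ' ∘ f) :=
  (hΓ _).2 ⟨σ', h, rfl⟩

theorem IsConservativeExtension.isExplanation_image_iff (hf : Injective f)
    (hΓ : IsConservativeExtension f Γ Γ') (P N : Set V) :
    IsExplanation Γ A φ P N ↔
      IsExplanation Γ' (f '' A) (fun σ' => φ (σ' ∘ f)) (f '' P) (f '' N) := by
  unfold IsExplanation
  simp only [image_subset_image_iff hf, disjoint_image_iff hf, satLits_image_iff]
  refine and_congr_right fun _ => and_congr_right fun _ => and_congr_right fun _ =>
    and_congr ⟨?_, ?_⟩ ⟨?_, ?_⟩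
  · rintro ⟨σ, hσ, hlits⟩
    obtain ⟨σ', hσ', rfl⟩ := (hΓ σ).1 hσ
    exact ⟨σ', hσ', hlits⟩
  · rintro ⟨σ', hσ', hlits⟩
    exact ⟨σ' ∘ f, hΓ.satKB_comp hσ', hlits⟩
  · intro hent σ' hσ' hlits
    exact hent _ (hΓ.satKB_comp hσ') hlits
  · intro hent σ hσ hlits
    obtain ⟨σ', hσ', rfl⟩ := (hΓ σ).1 hσ
    exact hent σ' hσ' hlits

theorem IsExplanation.image_preimage_eq {φ' : (W → Bool) → Bool} {P' N' : Set W}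
    (h : IsExplanation Γ' (f '' A) φ' P' N') :
    f '' (f ⁻¹' P') = P' ∧ f '' (f ⁻¹' N') = N' :=
  ⟨image_preimage_eq_of_subset (h.1.trans (image_subset_range f A)),
    image_preimage_eq_of_subset (h.2.1.trans (image_subset_range f A))⟩

theorem IsConservativeExtension.exists_isExplanation_iff (hf : Injective f)
    (hΓ : IsConservativeExtension f Γ Γ') :
    (∃ P N, IsExplanation Γ A φ P N) ↔
      ∃ P' N', IsExplanation Γ' (f '' A) (fun σ' => φ (σ' ∘ f)) P' N' := by
  refine ⟨fun ⟨P, N, h⟩ => ⟨f '' P, f '' N, (hΓ.isExplanation_image_iff hf P N).1 h⟩,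
    fun ⟨P', N', h⟩ => ?_⟩
  obtain ⟨hP, hN⟩ := h.image_preimage_eq
  refine ⟨f ⁻¹' P', f ⁻¹' N', (hΓ.isExplanation_image_iff hf _ _).2 ?_⟩
  rwa [hP, hN]

theorem IsConservativeExtension.exists_isExplanation_empty_iff (hf : Injective f)
    (hΓ : IsConservativeExtension f Γ Γ') :
    (∃ P, IsExplanation Γ A φ P ∅) ↔
      ∃ P', IsExplanation Γ' (f '' A) (fun σ' => φ (σ' ∘ f)) P' ∅ := by
  have key := fun P => hΓ.isExplanation_image_iff (A := A) (φ := φ) hf P ∅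
  simp only [image_empty] at key
  refine ⟨fun ⟨P, h⟩ => ⟨f '' P, (key P).1 h⟩, fun ⟨P', h⟩ => ⟨f ⁻¹' P', (key _).2 ?_⟩⟩
  rwa [h.image_preimage_eq.1]

end ConservativeExtension

section Placeholder

variable {V : Type*}

def placeholderTopKB (H : Set ((V → Bool) → Bool → Bool)) : Set ((V → Bool) → Bool) :=
  (fun η σ => η σ true) '' H

/-- The fresh variable `t` is `none`. -/
def placeholderVarKB (H : Set ((V → Bool) → Bool → Bool)) : Set ((Option V → Bool) → Bool) :=
  ((fun η σ' => η (σ' ∘ some) (σ' none)) '' H) ∪ {fun σ' => σ' none}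

theorem isConservativeExtension_placeholderVarKB (H : Set ((V → Bool) → Bool → Bool)) :
    IsConservativeExtension some (placeholderTopKB H) (placeholderVarKB H) := by
  refine fun σ => ⟨fun h => ⟨fun o => o.elim true σ, ?_, rfl⟩, ?_⟩
  · rintro _ (⟨η, hη, rfl⟩ | rfl)
    · exact h _ ⟨η, hη, rfl⟩
    · rfl
  · rintro ⟨σ', h, rfl⟩ _ ⟨η, hη, rfl⟩
    have ht : σ' none = true := h _ (Or.inr rfl)
    simpa [ht] using h _ (Or.inl ⟨η, hη, rfl⟩)

end Placeholder

theorem stmt_0_general (V : Type*) (H : Set ((V → Bool) → Bool → Bool))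
    (A : Set V) (φ : (V → Bool) → Bool) :
    let ΓT : Set ((V → Bool) → Bool) := (fun η : (V → Bool) → Bool → Bool =>
      fun σ : V → Bool => η σ true) '' H
    let Γt : Set ((Option V → Bool) → Bool) :=
      ((fun η : (V → Bool) → Bool → Bool =>
          fun σ' : Option V → Bool => η (fun v => σ' (some v)) (σ' none)) '' H) ∪
        {fun σ' : Option V → Bool => σ' none}
    let φ' : (Option V → Bool) → Bool := fun σ' => φ (fun v => σ' (some v))
    (∀ P N : Set V,
        IsExplanation ΓT A φ P N ↔
          IsExplanation Γt (some '' A) φ' (some '' P) (some '' N)) ∧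
    ((∃ P N : Set V, IsExplanation ΓT A φ P N) ↔
        (∃ P' N' : Set (Option V), IsExplanation Γt (some '' A) φ' P' N')) ∧
    ((∃ P : Set V, IsExplanation ΓT A φ P ∅) ↔
        (∃ P' : Set (Option V), IsExplanation Γt (some '' A) φ' P' ∅)) := by
  have hΓ := isConservativeExtension_placeholderVarKB H
  have hsome := Option.some_injective V
  exact ⟨hΓ.isExplanation_image_iff hsome, hΓ.exists_isExplanation_iff hsome,
    hΓ.exists_isExplanation_empty_iff hsome⟩

/-- Replacing the constant `⊤` (second argument of each `η ∈ H`) by a fresh variable `t`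
(modelled as `none : Option V`) together with the unit formula `t` preserves, literal set
by literal set, the explanations of the abduction instance; in particular existence of
explanations and of positive explanations is preserved. -/
theorem stmt_0 (V : Type*) (H : Set ((V → Bool) → Bool → Bool)) (hH : H.Finite)
    (A : Set V) (φ : (V → Bool) → Bool) :
    let ΓT : Set ((V → Bool) → Bool) := (fun η : (V → Bool) → Bool → Bool =>
      fun σ : V → Bool => η σ true) '' H
    let Γt : Set ((Option V → Bool) → Bool) :=
      ((fun η : (V → Bool) → Bool → Bool =>
          fun σ' : Option V → Bool => η (fun v => σ' (some v)) (σ' none)) '' H) ∪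
        {fun σ' : Option V → Bool => σ' none}
    let φ' : (Option V → Bool) → Bool := fun σ' => φ (fun v => σ' (some v))
    (∀ P N : Set V,
        IsExplanation ΓT A φ P N ↔
          IsExplanation Γt (some '' A) φ' (some '' P) (some '' N)) ∧
    ((∃ P N : Set V, IsExplanation ΓT A φ P N) ↔
        (∃ P' N' : Set (Option V), IsExplanation Γt (some '' A) φ' P' N')) ∧
    ((∃ P : Set V, IsExplanation ΓT A φ P ∅) ↔
        (∃ P' : Set (Option V), IsExplanation Γt (some '' A) φ' P' ∅)) :=
  stmt_0_general V H A φ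
end

section
/- Let V be a type of propositional variables and f ∉ V a fresh variable. Let H be a finite set of functions η : (V → Bool) → Bool → Bool, where the second argument represents the value substituted for a placeholder constant ⊥. Define the knowledge base Γ_⊥ := { σ ↦ η σ false : η ∈ H } over V, and the knowledge base Γ' := { σ' ↦ (η (σ' restricted to V) (σ' f)) ∨ σ' f : η ∈ H } over V ⊎ {f}. Let A ⊆ V, and let ψ be a formula over V that depends only on V \ A and is falsifiable (ψ τ = false for some assignment τ); extend ψ to V ⊎ {f} by ignoring f. Then (Γ_⊥, A, ψ) has an explanation if and only if (Γ', A ∪ {f}, ψ) has an explanation. -/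
section FreshVariable

variable {V : Type*}

/-- The knowledge base `Γ_⊥`. -/
def botKB (H : Set ((V → Bool) → Bool → Bool)) : Set ((V → Bool) → Bool) :=
  (fun η σ => η σ false) '' H

/-- The knowledge base `Γ'`, with the fresh variable `f` encoded as `none`. -/
def freshKB (H : Set ((V → Bool) → Bool → Bool)) : Set ((Option V → Bool) → Bool) :=
  (fun η σ' => η (fun v => σ' (some v)) (σ' none) || σ' none) '' H

variable {H : Set ((V → Bool) → Bool → Bool)} {A : Set V} {φ : (V → Bool) → Bool}

theorem satKB_freshKB_of_none_true {σ' : Option V → Bool} (h : σ' none = true) :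
    SatKB (freshKB H) σ' := by
  rintro _ ⟨η, -, rfl⟩
  simp [h]

theorem satKB_freshKB_iff_of_none_false {σ' : Option V → Bool} (h : σ' none = false) :
    SatKB (freshKB H) σ' ↔ SatKB (botKB H) (fun v => σ' (some v)) := by
  simp only [SatKB, freshKB, botKB, Set.forall_mem_image, h, Bool.or_false]

theorem satLits_option_iff {σ' : Option V → Bool} {P' N' : Set (Option V)} :
    SatLits σ' P' N' ↔ SatLits (fun v => σ' (some v)) (some ⁻¹' P') (some ⁻¹' N') ∧
      (none ∈ P' → σ' none = true) ∧ (none ∈ N' → σ' none = false) := by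
  simp only [SatLits, Option.forall, Set.mem_preimage]
  tauto

theorem exists_satLits_of_disjoint (τ : V → Bool) {P N : Set V} (hPN : Disjoint P N) :
    ∃ σ, SatLits σ P N ∧ ∀ x, x ∉ P → x ∉ N → σ x = τ x := by
  classical
  refine ⟨fun x => if x ∈ P then true else if x ∈ N then false else τ x,
    ⟨fun x hx => if_pos hx, fun x hx => ?_⟩, fun x hP hN => by simp [hP, hN]⟩
  simp [hx, hPN.notMem_of_mem_right hx]

theorem preimage_some_image_union_none (A : Set V) : some ⁻¹' (some '' A ∪ {none}) = A := by
  ext v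
  simp

theorem IsExplanation.freshKB_of_botKB {P N : Set V} (h : IsExplanation (botKB H) A φ P N) :
    IsExplanation (freshKB H) (some '' A ∪ {none}) (fun σ' => φ (fun v => σ' (some v)))
      (some '' P) (some '' N ∪ {none}) := by
  obtain ⟨hPA, hNA, hPN, ⟨σ, hσΓ, hσPN⟩, hent⟩ := h
  have hlits : ∀ σ' : Option V → Bool, SatLits σ' (some '' P) (some '' N ∪ {none}) ↔
      SatLits (fun v => σ' (some v)) P N ∧ σ' none = false := fun σ' => by
    rw [satLits_option_iff, preimage_some_image_union_none,
      Set.preimage_image_eq _ (Option.some_injective V)]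
    simp
  refine ⟨(Set.image_mono hPA).trans Set.subset_union_left,
    Set.union_subset_union_left _ (Set.image_mono hNA),
    Set.disjoint_union_right.2 ⟨(Set.disjoint_image_iff (Option.some_injective V)).2 hPN,
      Set.disjoint_singleton_right.2 (by simp)⟩,
    ⟨fun o => o.elim false σ, (satKB_freshKB_iff_of_none_false rfl).2 hσΓ,
      (hlits _).2 ⟨hσPN, rfl⟩⟩, fun σ' hΓ hl => ?_⟩
  obtain ⟨hl, hnone⟩ := (hlits σ').1 hl
  exact hent _ ((satKB_freshKB_iff_of_none_false hnone).1 hΓ) hl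

theorem IsExplanation.botKB_of_freshKB {P' N' : Set (Option V)}
    (h : IsExplanation (freshKB H) (some '' A ∪ {none}) (fun σ' => φ (fun v => σ' (some v)))
      P' N') (hnone : none ∈ N') :
    IsExplanation (botKB H) A φ (some ⁻¹' P') (some ⁻¹' N') := by
  obtain ⟨hPA, hNA, hPN, ⟨σ', hΓ, hl⟩, hent⟩ := h
  have hpre := preimage_some_image_union_none A
  refine ⟨hpre ▸ Set.preimage_mono hPA, hpre ▸ Set.preimage_mono hNA, hPN.preimage _,
    ⟨_, (satKB_freshKB_iff_of_none_false (hl.2 _ hnone)).1 hΓ, (satLits_option_iff.1 hl).1⟩,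
    fun σ hσΓ hσl => ?_⟩
  exact hent (fun o => o.elim false σ) ((satKB_freshKB_iff_of_none_false rfl).2 hσΓ)
    (satLits_option_iff.2 ⟨hσl, fun h => absurd h (hPN.notMem_of_mem_right hnone), fun _ => rfl⟩)

theorem none_mem_of_isExplanation_freshKB {P' N' : Set (Option V)}
    (hdep : ∀ σ τ : V → Bool, (∀ v ∉ A, σ v = τ v) → φ σ = φ τ) (hfals : ∃ τ, φ τ = false)
    (h : IsExplanation (freshKB H) (some '' A ∪ {none}) (fun σ' => φ (fun v => σ' (some v)))
      P' N') : none ∈ N' := by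
  obtain ⟨hPA, hNA, hPN, -, hent⟩ := h
  obtain ⟨τ, hτ⟩ := hfals
  by_contra hnone
  obtain ⟨σ', hl, hagree⟩ := exists_satLits_of_disjoint (fun o => o.elim true τ) hPN
  have hσnone : σ' none = true := by
    by_cases hP : none ∈ P'
    · exact hl.1 _ hP
    · exact hagree none hP hnone
  have hpre := preimage_some_image_union_none A
  have hoff : ∀ v ∉ A, σ' (some v) = τ v := fun v hv =>
    hagree (some v) (fun h => hv (hpre ▸ hPA h)) (fun h => hv (hpre ▸ hNA h))
  have hψ : φ (fun v => σ' (some v)) = true := hent σ' (satKB_freshKB_of_none_true hσnone) hl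
  rw [hdep _ _ hoff, hτ] at hψ
  exact Bool.false_ne_true hψ

end FreshVariable

theorem stmt_1_general (V : Type*) (H : Set ((V → Bool) → Bool → Bool))
    (A : Set V) (ψ : (V → Bool) → Bool)
    (hdep : ∀ σ τ : V → Bool, (∀ v ∉ A, σ v = τ v) → ψ σ = ψ τ)
    (hfals : ∃ τ : V → Bool, ψ τ = false) :
    let Γbot : Set ((V → Bool) → Bool) := (fun η : (V → Bool) → Bool → Bool =>
      fun σ : V → Bool => η σ false) '' H
    let Γ' : Set ((Option V → Bool) → Bool) :=
      (fun η : (V → Bool) → Bool → Bool =>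
        fun σ' : Option V → Bool => η (fun v => σ' (some v)) (σ' none) || σ' none) '' H
    let ψ' : (Option V → Bool) → Bool := fun σ' => ψ (fun v => σ' (some v))
    ((∃ P N : Set V, IsExplanation Γbot A ψ P N) ↔
        (∃ P' N' : Set (Option V),
          IsExplanation Γ' (some '' A ∪ {none}) ψ' P' N')) := by
  intro Γbot Γ' ψ'
  constructor
  · rintro ⟨P, N, h⟩
    exact ⟨_, _, h.freshKB_of_botKB⟩
  · rintro ⟨P', N', h⟩
    exact ⟨_, _, h.botKB_of_freshKB (none_mem_of_isExplanation_freshKB hdep hfals h)⟩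

/-- Replacing the constant `⊥` (second argument of each `η ∈ H`) by a fresh variable `f`
(modelled as `none : Option V`), disjoining `f` to every formula and adding `f` to the
hypotheses, preserves the existence of explanations, provided the manifestation `ψ`
depends only on `V \ A` and is falsifiable. -/
theorem stmt_1 (V : Type*) (H : Set ((V → Bool) → Bool → Bool)) (hH : H.Finite)
    (A : Set V) (ψ : (V → Bool) → Bool)
    (hdep : ∀ σ τ : V → Bool, (∀ v ∉ A, σ v = τ v) → ψ σ = ψ τ)
    (hfals : ∃ τ : V → Bool, ψ τ = false) :
    let Γbot : Set ((V → Bool) → Bool) := (fun η : (V → Bool) → Bool → Bool =>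
      fun σ : V → Bool => η σ false) '' H
    let Γ' : Set ((Option V → Bool) → Bool) :=
      (fun η : (V → Bool) → Bool → Bool =>
        fun σ' : Option V → Bool => η (fun v => σ' (some v)) (σ' none) || σ' none) '' H
    let ψ' : (Option V → Bool) → Bool := fun σ' => ψ (fun v => σ' (some v))
    ((∃ P N : Set V, IsExplanation Γbot A ψ P N) ↔
        (∃ P' N' : Set (Option V),
          IsExplanation Γ' (some '' A ∪ {none}) ψ' P' N')) :=
  stmt_1_general V H A ψ hdep hfals
end

section
/- Let Γ be a knowledge base over a type V of propositional variables, A ⊆ V a set of hypotheses, and φ a formula. If E = (P, N) is an explanation for (Γ, A, φ), then there exists a full explanation E' = (P', N') for (Γ, A, φ) extending E, i.e., with P ⊆ P', N ⊆ N' and P' ∪ N' = A. -/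
/-!
Pick a model `σ` of `Γ ∧ E` and let `E'` be the full set of literals over `A` that `σ` makes
true. Then `σ` still witnesses satisfiability of `Γ ∧ E'`, and since `E'` only adds literals,
every model of `Γ ∧ E'` is a model of `Γ ∧ E` and hence of `φ`.
-/

section

variable {V : Type*}

theorem SatLits.anti {σ : V → Bool} {P N P' N' : Set V} (h : SatLits σ P' N')
    (hP : P ⊆ P') (hN : N ⊆ N') : SatLits σ P N :=
  ⟨fun x hx => h.1 x (hP hx), fun x hx => h.2 x (hN hx)⟩

theorem IsExplanation.of_subset {Γ : Set ((V → Bool) → Bool)} {A : Set V}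
    {φ : (V → Bool) → Bool} {P N P' N' : Set V} (h : IsExplanation Γ A φ P N)
    (hP : P ⊆ P') (hN : N ⊆ N') (hP'A : P' ⊆ A) (hN'A : N' ⊆ A) (hdisj : Disjoint P' N')
    (hsat : ∃ σ, SatKB Γ σ ∧ SatLits σ P' N') : IsExplanation Γ A φ P' N' :=
  ⟨hP'A, hN'A, hdisj, hsat, fun σ hσΓ hσ => h.2.2.2.2 σ hσΓ (hσ.anti hP hN)⟩

section LiteralsOf

variable (σ : V → Bool) (A : Set V)

theorem sep_true_union_sep_false :
    {x ∈ A | σ x = true} ∪ {x ∈ A | σ x = false} = A := by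
  ext x
  cases hx : σ x <;> simp [hx]

theorem disjoint_sep_true_sep_false :
    Disjoint {x ∈ A | σ x = true} {x ∈ A | σ x = false} :=
  Set.disjoint_left.2 fun _ htrue hfalse => by simp [htrue.2] at hfalse

theorem satLits_sep_true_sep_false :
    SatLits σ {x ∈ A | σ x = true} {x ∈ A | σ x = false} :=
  ⟨fun _ hx => hx.2, fun _ hx => hx.2⟩

end LiteralsOf

end

theorem stmt_2_general (V : Type*) (Γ : Set ((V → Bool) → Bool))
    (A : Set V) (φ : (V → Bool) → Bool) (P N : Set V)
    (h : IsExplanation Γ A φ P N) :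
    ∃ P' N' : Set V, P ⊆ P' ∧ N ⊆ N' ∧ P' ∪ N' = A ∧ IsExplanation Γ A φ P' N' := by
  have ⟨hPA, hNA, _, ⟨σ, hσΓ, hσP, hσN⟩, _⟩ := h
  have hP : P ⊆ {x ∈ A | σ x = true} := fun x hx => ⟨hPA hx, hσP x hx⟩
  have hN : N ⊆ {x ∈ A | σ x = false} := fun x hx => ⟨hNA hx, hσN x hx⟩
  exact ⟨_, _, hP, hN, sep_true_union_sep_false σ A, h.of_subset hP hN
    (Set.sep_subset _ _) (Set.sep_subset _ _) (disjoint_sep_true_sep_false σ A)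
    ⟨σ, hσΓ, satLits_sep_true_sep_false σ A⟩⟩

/-- Every explanation extends to a full explanation. -/
theorem stmt_2 (V : Type*) (Γ : Set ((V → Bool) → Bool)) (hΓfin : Γ.Finite)
    (A : Set V) (φ : (V → Bool) → Bool) (P N : Set V)
    (h : IsExplanation Γ A φ P N) :
    ∃ P' N' : Set V, P ⊆ P' ∧ N ⊆ N' ∧ P' ∪ N' = A ∧ IsExplanation Γ A φ P' N' :=
  stmt_2_general V Γ A φ P N h
end

section
/- Let Γ be a knowledge base over V in which every formula γ ∈ Γ is a conjunction of literals, i.e., there exist finite sets P_γ, N_γ ⊆ V such that γ σ = true iff σ x = true for all x ∈ P_γ and σ x = false for all x ∈ N_γ. Let A ⊆ V and q ∈ V \ A. Then (Γ, A, q) has an explanation if and only if the empty set of literals is an explanation, equivalently, if and only if Γ is satisfiable and Γ ⊨ q. -/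
/-!
A conjunction of literals is satisfied by a product set of assignments, so the models of `Γ`
can be patched coordinatewise: if `σ` and `τ` are models, so is the assignment that follows
`σ` on some set `S` and `τ` elsewhere. Given an explanation `E` witnessed by `σ` and any model
`τ` of `Γ`, the model following `σ` on the variables of `E` and `τ` elsewhere satisfies `Γ ∧ E`,
hence `q`; since `q` does not occur in `E`, it agrees with `τ` at `q`. So `Γ ⊨ q`.
-/

section

variable {V : Type*}

theorem SatLits.piecewise {σ τ : V → Bool} {P N : Set V} (S : Set V) [DecidablePred (· ∈ S)]
    (hσ : SatLits σ P N) (hτ : SatLits τ P N) : SatLits (S.piecewise σ τ) P N := by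
  constructor <;> intro x hx <;> by_cases hxS : x ∈ S <;>
    simp [hxS, hσ.1 x, hσ.2 x, hτ.1 x, hτ.2 x, hx]

theorem satKB_piecewise {Γ : Set ((V → Bool) → Bool)}
    (hΓ : ∀ γ ∈ Γ, ∃ P N : Set V, ∀ σ, γ σ = true ↔ SatLits σ P N)
    {σ τ : V → Bool} (S : Set V) [DecidablePred (· ∈ S)]
    (hσ : SatKB Γ σ) (hτ : SatKB Γ τ) : SatKB Γ (S.piecewise σ τ) := by
  intro γ hγ
  obtain ⟨P, N, hγ_iff⟩ := hΓ γ hγ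
  exact (hγ_iff _).2 <| ((hγ_iff σ).1 (hσ γ hγ)).piecewise S ((hγ_iff τ).1 (hτ γ hγ))

theorem entails_of_isExplanation {Γ : Set ((V → Bool) → Bool)}
    (hΓ : ∀ γ ∈ Γ, ∃ P N : Set V, ∀ σ, γ σ = true ↔ SatLits σ P N)
    {A P N : Set V} {q : V} (hq : q ∉ A) (hE : IsExplanation Γ A (fun σ => σ q) P N)
    {τ : V → Bool} (hτ : SatKB Γ τ) : τ q = true := by
  classical
  obtain ⟨hPA, hNA, -, ⟨σ, hσΓ, hσE⟩, hentails⟩ := hE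
  have hρE : SatLits ((P ∪ N).piecewise σ τ) P N :=
    ⟨fun x hx => by simp [hx, hσE.1 x hx], fun x hx => by simp [hx, hσE.2 x hx]⟩
  have hqPN : q ∉ P ∪ N := fun h => hq (h.elim (@hPA q) (@hNA q))
  simpa [hqPN] using hentails _ (satKB_piecewise hΓ (P ∪ N) hσΓ hτ) hρE

theorem isExplanation_empty_iff {Γ : Set ((V → Bool) → Bool)} {A : Set V}
    {φ : (V → Bool) → Bool} :
    IsExplanation Γ A φ ∅ ∅ ↔ (∃ σ, SatKB Γ σ) ∧ ∀ σ, SatKB Γ σ → φ σ = true := by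
  simp [IsExplanation, SatLits]

theorem isExplanation_empty_of_isExplanation {Γ : Set ((V → Bool) → Bool)}
    (hΓ : ∀ γ ∈ Γ, ∃ P N : Set V, ∀ σ, γ σ = true ↔ SatLits σ P N)
    {A P N : Set V} {q : V} (hq : q ∉ A) (hE : IsExplanation Γ A (fun σ => σ q) P N) :
    IsExplanation Γ A (fun σ => σ q) ∅ ∅ := by
  obtain ⟨σ, hσΓ, -⟩ := hE.2.2.2.1
  exact isExplanation_empty_iff.2 ⟨⟨σ, hσΓ⟩, fun _ hτ => entails_of_isExplanation hΓ hq hE hτ⟩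

end

theorem stmt_3_general (V : Type*) (Γ : Set ((V → Bool) → Bool))
    (hΓ : ∀ γ ∈ Γ, ∃ P N : Finset V, ∀ σ : V → Bool,
        γ σ = true ↔ ((∀ x ∈ P, σ x = true) ∧ (∀ x ∈ N, σ x = false)))
    (A : Set V) (q : V) (hq : q ∉ A) :
    ((∃ P N : Set V, IsExplanation Γ A (fun σ => σ q) P N) ↔
        IsExplanation Γ A (fun σ => σ q) ∅ ∅) ∧
    ((∃ P N : Set V, IsExplanation Γ A (fun σ => σ q) P N) ↔
        ((∃ σ, SatKB Γ σ) ∧ ∀ σ, SatKB Γ σ → σ q = true)) := by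
  have hΓ' : ∀ γ ∈ Γ, ∃ P N : Set V, ∀ σ, γ σ = true ↔ SatLits σ P N := by
    intro γ hγ
    obtain ⟨P, N, hγ_iff⟩ := hΓ γ hγ
    exact ⟨P, N, hγ_iff⟩
  have hempty : (∃ P N : Set V, IsExplanation Γ A (fun σ => σ q) P N) ↔
      IsExplanation Γ A (fun σ => σ q) ∅ ∅ :=
    ⟨fun ⟨_, _, hE⟩ => isExplanation_empty_of_isExplanation hΓ' hq hE, fun h => ⟨∅, ∅, h⟩⟩
  exact ⟨hempty, hempty.trans isExplanation_empty_iff⟩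

/-- If every formula of `Γ` is a conjunction of literals, then `(Γ, A, q)` has an
explanation iff the empty set of literals is one, iff `Γ` is satisfiable and `Γ ⊨ q`. -/
theorem stmt_3 (V : Type*) (Γ : Set ((V → Bool) → Bool)) (hΓfin : Γ.Finite)
    (hΓ : ∀ γ ∈ Γ, ∃ P N : Finset V, ∀ σ : V → Bool,
        γ σ = true ↔ ((∀ x ∈ P, σ x = true) ∧ (∀ x ∈ N, σ x = false)))
    (A : Set V) (q : V) (hq : q ∉ A) :
    ((∃ P N : Set V, IsExplanation Γ A (fun σ => σ q) P N) ↔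
        IsExplanation Γ A (fun σ => σ q) ∅ ∅) ∧
    ((∃ P N : Set V, IsExplanation Γ A (fun σ => σ q) P N) ↔
        ((∃ σ, SatKB Γ σ) ∧ ∀ σ, SatKB Γ σ → σ q = true)) :=
  stmt_3_general V Γ hΓ A q hq
end

section
/- Let Γ be a knowledge base over V in which every formula is either a constant (σ ↦ true or σ ↦ false) or a disjunction of a nonempty finite set of variables, i.e., of the form σ ↦ (∃ x ∈ C, σ x = true) for a nonempty finite C ⊆ V. Let A ⊆ V and q ∈ V \ A. Then (Γ, A, q) has an explanation if and only if there exists a formula in Γ that is a disjunction over a set C with q ∈ C and C \ {q} ⊆ A such that the knowledge base Γ' := { σ ↦ γ (σ updated to false on all x ∈ C \ {q}) : γ ∈ Γ } obtained from Γ by substituting false for all variables of C \ {q} is satisfiable. -/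
open Function Finset

section

variable {V : Type*}

def IsDisjunctionOf (γ : (V → Bool) → Bool) (C : Finset V) : Prop :=
  ∀ σ, γ σ = true ↔ ∃ x ∈ C, σ x = true

theorem IsDisjunctionOf.eq_false_iff {γ : (V → Bool) → Bool} {C : Finset V}
    (hC : IsDisjunctionOf γ C) (σ : V → Bool) : γ σ = false ↔ ∀ x ∈ C, σ x = false := by
  simpa using (hC σ).not

theorem exists_isDisjunctionOf_of_eq_true_of_eq_false {γ : (V → Bool) → Bool}
    (hγ : (∀ σ, γ σ = true) ∨ (∀ σ, γ σ = false) ∨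
      ∃ C : Finset V, C.Nonempty ∧ IsDisjunctionOf γ C)
    {σ₁ σ₀ : V → Bool} (h₁ : γ σ₁ = true) (h₀ : γ σ₀ = false) :
    ∃ C : Finset V, IsDisjunctionOf γ C := by
  rcases hγ with htrue | hfalse | ⟨C, -, hC⟩
  · simp [htrue σ₀] at h₀
  · simp [hfalse σ₁] at h₁
  · exact ⟨C, hC⟩

theorem satKB_image_comp_iff (Γ : Set ((V → Bool) → Bool)) (f : (V → Bool) → V → Bool)
    (σ : V → Bool) : SatKB ((fun γ τ => γ (f τ)) '' Γ) σ ↔ SatKB Γ (f σ) := by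
  simp [SatKB]

theorem ite_mem_false_eq_self [DecidableEq V] {S : Finset V} {σ : V → Bool}
    (h : ∀ x ∈ S, σ x = false) : (fun x => if x ∈ S then false else σ x) = σ := by
  funext x
  split_ifs with hx
  · exact (h x hx).symm
  · rfl

theorem not_satKB_of_isExplanation {Γ : Set ((V → Bool) → Bool)} {A P N : Set V} {q : V}
    (hE : IsExplanation Γ A (fun σ => σ q) P N) {σ₀ σ : V → Bool} (hσ₀ : SatLits σ₀ P N)
    (hσA : Set.EqOn σ σ₀ A) (hσq : σ q = false) : ¬ SatKB Γ σ := by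
  obtain ⟨hPA, hNA, -, -, hentails⟩ := hE
  intro hσ
  have hlits : SatLits σ P N :=
    ⟨fun x hx => (hσA (hPA hx)).trans (hσ₀.1 x hx),
      fun x hx => (hσA (hNA hx)).trans (hσ₀.2 x hx)⟩
  simpa [hσq] using hentails σ hσ hlits

theorem exists_disjunction_of_isExplanation [DecidableEq V] {Γ : Set ((V → Bool) → Bool)}
    (hΓ : ∀ γ ∈ Γ, (∀ σ, γ σ = true) ∨ (∀ σ, γ σ = false) ∨
      ∃ C : Finset V, C.Nonempty ∧ IsDisjunctionOf γ C)
    {A P N : Set V} {q : V} (hq : q ∉ A) (hE : IsExplanation Γ A (fun σ => σ q) P N) :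
    ∃ γ ∈ Γ, ∃ C : Finset V, IsDisjunctionOf γ C ∧ q ∈ C ∧ ↑(C.erase q) ⊆ A ∧
      ∃ σ₀, SatKB Γ σ₀ ∧ ∀ x ∈ C.erase q, σ₀ x = false := by
  classical
  obtain ⟨σ₀, hσ₀Γ, hσ₀⟩ := hE.2.2.2.1
  set σ := update (A.piecewise σ₀ fun _ => true) q false
  have hσA : Set.EqOn σ σ₀ A := fun x hx => by
    simp [σ, update_of_ne (ne_of_mem_of_not_mem hx hq), hx]
  have hσ_out : ∀ x ∉ A, x ≠ q → σ x = true := fun x hxA hxq => by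
    simp [σ, update_of_ne hxq, hxA]
  obtain ⟨γ, hγ, hγσ⟩ : ∃ γ ∈ Γ, γ σ = false := by
    simpa [SatKB] using not_satKB_of_isExplanation hE hσ₀ hσA (update_self _ _ _)
  obtain ⟨C, hC⟩ := exists_isDisjunctionOf_of_eq_true_of_eq_false (hΓ γ hγ) (hσ₀Γ γ hγ) hγσ
  have hCσ : ∀ x ∈ C, σ x = false := (hC.eq_false_iff σ).1 hγσ
  have hCA : ↑(C.erase q) ⊆ A := fun x hx => by
    obtain ⟨hxq, hxC⟩ := mem_erase.1 hx
    by_contra hxA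
    simpa [hσ_out x hxA hxq] using hCσ x hxC
  have hσ₀C : ∀ x ∈ C.erase q, σ₀ x = false := fun x hx =>
    (hσA (hCA hx)).symm.trans (hCσ x (mem_of_mem_erase hx))
  have hqC : q ∈ C := by
    obtain ⟨x, hxC, hx⟩ := (hC σ₀).1 (hσ₀Γ γ hγ)
    by_contra hqC
    simpa [hx] using hσ₀C x (mem_erase.2 ⟨ne_of_mem_of_not_mem hxC hqC, hxC⟩)
  exact ⟨γ, hγ, C, hC, hqC, hCA, σ₀, hσ₀Γ, hσ₀C⟩

theorem isExplanation_erase_of_isDisjunctionOf [DecidableEq V] {Γ : Set ((V → Bool) → Bool)}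
    {A : Set V} {q : V} {γ : (V → Bool) → Bool} {C : Finset V} (hγ : γ ∈ Γ)
    (hC : IsDisjunctionOf γ C) (hCA : ↑(C.erase q) ⊆ A) {σ : V → Bool}
    (hσ : SatKB Γ (fun x => if x ∈ C.erase q then false else σ x)) :
    IsExplanation Γ A (fun σ => σ q) ∅ ↑(C.erase q) := by
  refine ⟨Set.empty_subset A, hCA, disjoint_bot_left,
    ⟨_, hσ, fun _ h => h.elim, fun _ hx => if_pos hx⟩, ?_⟩
  rintro τ hτ ⟨-, hτC⟩
  obtain ⟨x, hxC, hx⟩ := (hC τ).1 (hτ γ hγ)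
  by_cases hxq : x = q
  · exact hxq ▸ hx
  · simpa [hx] using hτC x (mem_erase.2 ⟨hxq, hxC⟩)

end

theorem stmt_4_general (V : Type*) [DecidableEq V] (Γ : Set ((V → Bool) → Bool))
    (hΓ : ∀ γ ∈ Γ, (∀ σ, γ σ = true) ∨ (∀ σ, γ σ = false) ∨
        ∃ C : Finset V, C.Nonempty ∧ ∀ σ, (γ σ = true ↔ ∃ x ∈ C, σ x = true))
    (A : Set V) (q : V) (hq : q ∉ A) :
    (∃ P N : Set V, IsExplanation Γ A (fun σ => σ q) P N) ↔
      ∃ γ ∈ Γ, ∃ C : Finset V,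
        (∀ σ, (γ σ = true ↔ ∃ x ∈ C, σ x = true)) ∧ q ∈ C ∧ ↑(C.erase q) ⊆ A ∧
        ∃ σ : V → Bool,
          SatKB ((fun γ' : (V → Bool) → Bool =>
            fun τ : V → Bool =>
              γ' (fun x => if x ∈ C.erase q then false else τ x)) '' Γ) σ := by
  constructor
  · rintro ⟨P, N, hE⟩
    obtain ⟨γ, hγ, C, hC, hqC, hCA, σ₀, hσ₀, hσ₀C⟩ := exists_disjunction_of_isExplanation hΓ hq hE
    refine ⟨γ, hγ, C, hC, hqC, hCA, σ₀, ?_⟩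
    rwa [satKB_image_comp_iff, ite_mem_false_eq_self hσ₀C]
  · rintro ⟨γ, hγ, C, hC, -, hCA, σ, hσ⟩
    rw [satKB_image_comp_iff] at hσ
    exact ⟨_, _, isExplanation_erase_of_isDisjunctionOf hγ hC hCA hσ⟩

/-- If every formula of `Γ` is a constant or a disjunction of a nonempty finite set of
variables, then `(Γ, A, q)` has an explanation iff `Γ` contains a disjunction over a set
`C` with `q ∈ C` and `C \ {q} ⊆ A` such that substituting `false` for all variables in
`C \ {q}` leaves `Γ` satisfiable. -/
theorem stmt_4 (V : Type*) [DecidableEq V] (Γ : Set ((V → Bool) → Bool)) (hΓfin : Γ.Finite)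
    (hΓ : ∀ γ ∈ Γ, (∀ σ, γ σ = true) ∨ (∀ σ, γ σ = false) ∨
        ∃ C : Finset V, C.Nonempty ∧ ∀ σ, (γ σ = true ↔ ∃ x ∈ C, σ x = true))
    (A : Set V) (q : V) (hq : q ∉ A) :
    (∃ P N : Set V, IsExplanation Γ A (fun σ => σ q) P N) ↔
      ∃ γ ∈ Γ, ∃ C : Finset V,
        (∀ σ, (γ σ = true ↔ ∃ x ∈ C, σ x = true)) ∧ q ∈ C ∧ ↑(C.erase q) ⊆ A ∧
        ∃ σ : V → Bool,
          SatKB ((fun γ' : (V → Bool) → Bool =>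
            fun τ : V → Bool =>
              γ' (fun x => if x ∈ C.erase q then false else τ x)) '' Γ) σ :=
  stmt_4_general V Γ hΓ A q hq
end

section
/- Let S be a finite system of m linear equations over ZMod 2 in unknowns x₁, …, xₙ, the i-th equation reading ∑_{j ∈ sᵢ} xⱼ = cᵢ for a finite set sᵢ ⊆ {1, …, n} and cᵢ ∈ ZMod 2. Over the variable set V = {x₁, …, xₙ} ⊎ {q}, let φᵢ be the formula with φᵢ σ = true iff ∑_{j ∈ sᵢ} σ(xⱼ) = cᵢ in ZMod 2 (Booleans read as elements of ZMod 2), and define Γ' := { σ ↦ xor (φᵢ σ) (σ q) : i with φᵢ(all-true) = false } ∪ { φᵢ : i with φᵢ(all-true) = true }. Then the all-true assignment satisfies Γ', and S has no solution in (ZMod 2)ⁿ if and only if (Γ', ∅, q) has an explanation (equivalently, if and only if Γ' ⊨ q). -/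
/-!
The formulas of `Γ'` are the equations `φᵢ`, each XOR-ed with `q` when the all-true assignment
violates it, so that the all-true assignment satisfies `Γ'`. On assignments with `q = false` the
XOR is invisible, so such a model of `Γ'` is exactly a solution of the system (reading Booleans as
elements of `ZMod 2`). Hence `Γ' ⊨ q` iff the system is unsolvable; and as `Γ'` is satisfiable,
an explanation over no abducibles exists iff `Γ' ⊨ q`.
-/

theorem exists_isExplanation_empty_iff {V : Type*} (Γ : Set ((V → Bool) → Bool))
    (φ : (V → Bool) → Bool) :
    (∃ P N : Set V, IsExplanation Γ ∅ φ P N) ↔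
      (∃ σ, SatKB Γ σ) ∧ ∀ σ, SatKB Γ σ → φ σ = true := by
  have hlits : ∀ σ : V → Bool, SatLits σ ∅ ∅ := fun _ => by simp [SatLits]
  constructor
  · rintro ⟨P, N, hP, hN, -, ⟨σ, hσ, -⟩, hφ⟩
    obtain rfl : P = ∅ := Set.subset_empty_iff.mp hP
    obtain rfl : N = ∅ := Set.subset_empty_iff.mp hN
    exact ⟨⟨σ, hσ⟩, fun σ hσ => hφ σ hσ (hlits σ)⟩
  · rintro ⟨⟨σ, hσ⟩, hφ⟩
    exact ⟨∅, ∅, subset_rfl, subset_rfl, disjoint_bot_left, ⟨σ, hσ, hlits σ⟩,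
      fun σ hσ _ => hφ σ hσ⟩

section ShiftedKB

variable {ι V : Type*} (φ : ι → (V → Bool) → Bool) (τ : V → Bool) (q : V)

def shiftedKB : Set ((V → Bool) → Bool) :=
  ((fun i σ => xor (φ i σ) (σ q)) '' {i | φ i τ = false}) ∪ (φ '' {i | φ i τ = true})

variable {φ τ q}

theorem satKB_shiftedKB_self (hq : τ q = true) : SatKB (shiftedKB φ τ q) τ := by
  rintro γ (⟨i, hi, rfl⟩ | ⟨i, hi, rfl⟩)
  · simp only [Set.mem_ofPred_eq] at hi
    simp [hi, hq]
  · exact hi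

theorem satKB_shiftedKB_iff_of_eq_false {σ : V → Bool} (hq : σ q = false) :
    SatKB (shiftedKB φ τ q) σ ↔ ∀ i, φ i σ = true := by
  constructor
  · intro hσ i
    cases hi : φ i τ
    · simpa [hq] using hσ _ (Or.inl ⟨i, hi, rfl⟩)
    · exact hσ _ (Or.inr ⟨i, hi, rfl⟩)
  · rintro hσ γ (⟨i, -, rfl⟩ | ⟨i, -, rfl⟩)
    · simp [hσ i, hq]
    · exact hσ i

theorem shiftedKB_entails_iff :
    (∀ σ, SatKB (shiftedKB φ τ q) σ → σ q = true) ↔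
      ¬ ∃ σ : V → Bool, σ q = false ∧ ∀ i, φ i σ = true := by
  simp only [not_exists, not_and]
  refine forall_congr' fun σ => ?_
  cases hq : σ q
  · simp [satKB_shiftedKB_iff_of_eq_false hq]
  · simp

end ShiftedKB

theorem ZMod.two_ite_eq_one (x : ZMod 2) : (if x = 1 then 1 else 0) = x := by
  fin_cases x <;> rfl

theorem exists_zmod_two_solution_iff {n m : ℕ} (s : Fin m → Finset (Fin n))
    (c : Fin m → ZMod 2) :
    (∃ a : Fin n → ZMod 2, ∀ i, ∑ j ∈ s i, a j = c i) ↔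
      ∃ σ : Option (Fin n) → Bool, σ none = false ∧
        ∀ i, (∑ j ∈ s i, if σ (some j) = true then (1 : ZMod 2) else 0) = c i := by
  constructor
  · rintro ⟨a, ha⟩
    refine ⟨fun o => o.elim false fun j => decide (a j = 1), rfl, fun i => ?_⟩
    simpa only [Option.elim_some, decide_eq_true_eq, ZMod.two_ite_eq_one] using ha i
  · rintro ⟨σ, -, hσ⟩
    exact ⟨fun j => if σ (some j) = true then 1 else 0, hσ⟩

/-- Reduction from inconsistency of a system of linear equations over `ZMod 2` to the
abduction problem with affine knowledge base. -/
theorem stmt_5 (n m : ℕ) (s : Fin m → Finset (Fin n)) (c : Fin m → ZMod 2) :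
    let φ : Fin m → (Option (Fin n) → Bool) → Bool := fun i σ =>
      decide ((∑ j ∈ s i, if σ (some j) = true then (1 : ZMod 2) else 0) = c i)
    let Γ' : Set ((Option (Fin n) → Bool) → Bool) :=
      ((fun i : Fin m => fun σ : Option (Fin n) → Bool => xor (φ i σ) (σ none)) ''
          {i | φ i (fun _ => true) = false}) ∪
        (φ '' {i | φ i (fun _ => true) = true})
    SatKB Γ' (fun _ => true) ∧
    ((¬ ∃ a : Fin n → ZMod 2, ∀ i : Fin m, ∑ j ∈ s i, a j = c i) ↔
        ∃ P N : Set (Option (Fin n)),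
          IsExplanation Γ' ∅ (fun σ => σ none) P N) ∧
    ((¬ ∃ a : Fin n → ZMod 2, ∀ i : Fin m, ∑ j ∈ s i, a j = c i) ↔
        ∀ σ, SatKB Γ' σ → σ none = true) := by
  intro φ Γ'
  have hsat : SatKB Γ' (fun _ => true) := satKB_shiftedKB_self rfl
  have hentails : (¬ ∃ a : Fin n → ZMod 2, ∀ i : Fin m, ∑ j ∈ s i, a j = c i) ↔
      ∀ σ, SatKB Γ' σ → σ none = true := by
    rw [exists_zmod_two_solution_iff]
    refine Iff.trans ?_ (shiftedKB_entails_iff (φ := φ) (τ := fun _ => true) (q := none)).symm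
    simp only [φ, decide_eq_true_eq]
  refine ⟨hsat, ?_, hentails⟩
  rw [hentails, exists_isExplanation_empty_iff]
  exact (and_iff_right ⟨_, hsat⟩).symm
end

section
/- Let I be a finite index set and let φ = ⋀_{i ∈ I} (x_{i1} ∨ x_{i2} ∨ x_{i3}) be a CNF over a finite variable set X in which every clause consists of exactly three positive literals x_{i1}, x_{i2}, x_{i3} ∈ X. Let q and qᵢ (i ∈ I) be fresh, pairwise distinct variables, let V := X ∪ {qᵢ : i ∈ I} ∪ {q}, and define the knowledge base Γ := { σ ↦ σ x_{i1} ∨ σ x_{i2} ∨ σ x_{i3} : i ∈ I } ∪ { σ ↦ σ x_{i1} ∨ σ x_{i2} ∨ σ qᵢ, σ ↦ σ x_{i1} ∨ σ x_{i3} ∨ σ qᵢ, σ ↦ σ x_{i2} ∨ σ x_{i3} ∨ σ qᵢ : i ∈ I } ∪ { σ ↦ (⋁_{i ∈ I} (σ x_{i1} ∧ σ x_{i2} ∧ σ x_{i3})) ∨ (⋁_{i ∈ I} σ qᵢ) ∨ σ q }, and A := X ∪ {qᵢ : i ∈ I}. Then there exists an assignment on X that sets to true exactly two of x_{i1}, x_{i2},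 x_{i3} for every i ∈ I if and only if (Γ, A, q) has an explanation. -/
/-!
An assignment `a` hitting every clause in exactly two variables yields the explanation that
fixes the `x`'s to `a` and every `qᵢ` to false: the last formula of `Γ` then forces `q`.
Conversely, if `(P, N)` explains `q`, take a model `σ` of `Γ ∧ E` and switch `q` off. Since
`q ∉ A`, this is still a model of `E`, so it must violate `Γ`, and only the last formula can
fail. Hence under `σ` no clause has all three variables true and every `qᵢ` is false, and the
three clauses with `qᵢ` say that every pair of variables of clause `i` contains a true one.
-/

lemma Bool.toNat_add_toNat_add_toNat_eq_two_iff (b₀ b₁ b₂ : Bool) :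
    b₀.toNat + b₁.toNat + b₂.toNat = 2 ↔
      (b₀ = true ∨ b₁ = true) ∧ (b₀ = true ∨ b₂ = true) ∧ (b₁ = true ∨ b₂ = true) ∧
        ¬(b₀ = true ∧ b₁ = true ∧ b₂ = true) := by
  cases b₀ <;> cases b₁ <;> cases b₂ <;> simp

section Abduction

variable {V : Type*}

lemma satLits_inter_iff {A : Set V} {σ₀ σ : V → Bool} :
    SatLits σ (A ∩ {v | σ₀ v = true}) (A ∩ {v | σ₀ v = false}) ↔ ∀ v ∈ A, σ v = σ₀ v := by
  refine ⟨fun ⟨hP, hN⟩ v hv => ?_, fun h => ⟨fun v hv => ?_, fun v hv => ?_⟩⟩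
  · cases h₀ : σ₀ v
    exacts [hN v ⟨hv, h₀⟩, hP v ⟨hv, h₀⟩]
  · exact (h v hv.1).trans hv.2
  · exact (h v hv.1).trans hv.2

lemma isExplanation_of_forall_agree {Γ : Set ((V → Bool) → Bool)} {A : Set V}
    {φ : (V → Bool) → Bool} {σ₀ : V → Bool} (h₀ : SatKB Γ σ₀)
    (hφ : ∀ σ, SatKB Γ σ → (∀ v ∈ A, σ v = σ₀ v) → φ σ = true) :
    IsExplanation Γ A φ (A ∩ {v | σ₀ v = true}) (A ∩ {v | σ₀ v = false}) := by
  refine ⟨Set.inter_subset_left, Set.inter_subset_left, ?_, ⟨σ₀, h₀, ?_⟩, ?_⟩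
  · refine Set.disjoint_left.mpr fun v hP hN => ?_
    simp_all
  · exact satLits_inter_iff.mpr fun _ _ => rfl
  · exact fun σ hσ hlits => hφ σ hσ (satLits_inter_iff.mp hlits)

lemma SatLits.update_of_notMem {A P N : Set V} [DecidableEq V] {σ : V → Bool} {q : V}
    (hlits : SatLits σ P N) (hP : P ⊆ A) (hN : N ⊆ A) (hq : q ∉ A) (b : Bool) :
    SatLits (Function.update σ q b) P N := by
  have hne : ∀ v ∈ A, v ≠ q := fun v hv h => hq (h ▸ hv)
  exact ⟨fun v hv => (Function.update_of_ne (hne v (hP hv)) _ _).trans (hlits.1 v hv),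
    fun v hv => (Function.update_of_ne (hne v (hN hv)) _ _).trans (hlits.2 v hv)⟩

lemma IsExplanation.not_satKB_update_false {Γ : Set ((V → Bool) → Bool)} {A P N : Set V}
    [DecidableEq V] {q : V} (hE : IsExplanation Γ A (fun σ => σ q) P N) (hq : q ∉ A)
    {σ : V → Bool} (hlits : SatLits σ P N) :
    ¬ SatKB Γ (Function.update σ q false) := fun h => by
  simpa using hE.2.2.2.2 _ h (hlits.update_of_notMem hE.1 hE.2.1 hq false)

end Abduction

section Reduction

variable {X I : Type*} [Fintype I] (x : I → Fin 3 → X)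

/-- `Sum.inr (some i)` is `qᵢ` and `Sum.inr none` is `q`. -/
def reductionKB : Set ((X ⊕ Option I → Bool) → Bool) :=
  Set.range (fun i : I => fun σ : X ⊕ Option I → Bool =>
      σ (Sum.inl (x i 0)) || σ (Sum.inl (x i 1)) || σ (Sum.inl (x i 2))) ∪
  Set.range (fun i : I => fun σ : X ⊕ Option I → Bool =>
      σ (Sum.inl (x i 0)) || σ (Sum.inl (x i 1)) || σ (Sum.inr (some i))) ∪
  Set.range (fun i : I => fun σ : X ⊕ Option I → Bool =>
      σ (Sum.inl (x i 0)) || σ (Sum.inl (x i 2)) || σ (Sum.inr (some i))) ∪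
  Set.range (fun i : I => fun σ : X ⊕ Option I → Bool =>
      σ (Sum.inl (x i 1)) || σ (Sum.inl (x i 2)) || σ (Sum.inr (some i))) ∪
  {fun σ : X ⊕ Option I → Bool =>
      decide (∃ i : I, σ (Sum.inl (x i 0)) = true ∧ σ (Sum.inl (x i 1)) = true ∧
        σ (Sum.inl (x i 2)) = true) ||
      decide (∃ i : I, σ (Sum.inr (some i)) = true) || σ (Sum.inr none)}

lemma satKB_reductionKB_iff (σ : X ⊕ Option I → Bool) :
    SatKB (reductionKB x) σ ↔
      (∀ i, (σ (.inl (x i 0)) ∨ σ (.inl (x i 1)) ∨ σ (.inl (x i 2))) ∧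
        (σ (.inl (x i 0)) ∨ σ (.inl (x i 1)) ∨ σ (.inr (some i))) ∧
        (σ (.inl (x i 0)) ∨ σ (.inl (x i 2)) ∨ σ (.inr (some i))) ∧
        (σ (.inl (x i 1)) ∨ σ (.inl (x i 2)) ∨ σ (.inr (some i)))) ∧
      ((∃ i, σ (.inl (x i 0)) ∧ σ (.inl (x i 1)) ∧ σ (.inl (x i 2))) ∨
        (∃ i, σ (.inr (some i))) ∨ σ (.inr none)) := by
  simp only [SatKB, reductionKB, Set.mem_union, Set.mem_singleton_iff, or_imp, forall_and,
    forall_eq, Set.forall_mem_range, Bool.or_eq_true, decide_eq_true_eq, and_assoc, or_assoc]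

lemma exists_isExplanation_reductionKB {a : X → Bool}
    (ha : ∀ i, (a (x i 0)).toNat + (a (x i 1)).toNat + (a (x i 2)).toNat = 2) :
    ∃ P N, IsExplanation (reductionKB x) {v | v ≠ .inr none} (fun σ => σ (.inr none)) P N := by
  simp only [Bool.toNat_add_toNat_add_toNat_eq_two_iff] at ha
  let σ₀ : X ⊕ Option I → Bool := Sum.elim a fun o => o.elim true fun _ => false
  refine ⟨_, _, isExplanation_of_forall_agree (σ₀ := σ₀) ?_ fun σ hσ hagree => ?_⟩
  · simp only [satKB_reductionKB_iff, σ₀, Sum.elim_inl, Sum.elim_inr, Option.elim_some,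
      Option.elim_none, Bool.false_eq_true, or_false, or_true, and_true]
    exact fun i => ⟨(ha i).1.imp_right Or.inl, (ha i).1, (ha i).2.1, (ha i).2.2.1⟩
  · have hX : ∀ y, σ (.inl y) = a y := fun y => hagree _ (by simp)
    have hQ : ∀ i, σ (.inr (some i)) = false := fun i => hagree _ (by simp)
    simpa [hX, hQ, ha] using ((satKB_reductionKB_iff x σ).mp hσ).2

lemma exactlyTwo_of_isExplanation_reductionKB {P N : Set (X ⊕ Option I)}
    (hE : IsExplanation (reductionKB x) {v | v ≠ .inr none} (fun σ => σ (.inr none)) P N) :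
    ∃ a : X → Bool, ∀ i, (a (x i 0)).toNat + (a (x i 1)).toNat + (a (x i 2)).toNat = 2 := by
  classical
  obtain ⟨σ, hσ, hlits⟩ := hE.2.2.2.1
  have hoff := hE.not_satKB_update_false (by simp) hlits
  rw [satKB_reductionKB_iff] at hσ hoff
  simp only [ne_eq, reduceCtorEq, not_false_eq_true, Sum.inr.injEq, Function.update_of_ne,
    Function.update_self, Bool.false_eq_true, or_false, not_and, not_or, not_exists, Bool.not_eq_true] at hoff
  obtain ⟨hnotAll, hQ⟩ := hoff hσ.1
  refine ⟨fun y => σ (.inl y), fun i =>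
    (Bool.toNat_add_toNat_add_toNat_eq_two_iff _ _ _).mpr ?_⟩
  obtain ⟨-, h01, h02, h12⟩ := hσ.1 i
  simp only [hQ, Bool.false_eq_true, or_false] at h01 h02 h12
  exact ⟨h01, h02, h12, fun ⟨h0, h1, h2⟩ => by simp [hnotAll i h0 h1] at h2⟩

end Reduction

theorem stmt_6_general (X : Type*) (I : Type*) [Fintype I]
    (x : I → Fin 3 → X) :
    let Γ : Set ((X ⊕ Option I → Bool) → Bool) :=
      Set.range (fun i : I => fun σ : X ⊕ Option I → Bool =>
          σ (Sum.inl (x i 0)) || σ (Sum.inl (x i 1)) || σ (Sum.inl (x i 2))) ∪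
      Set.range (fun i : I => fun σ : X ⊕ Option I → Bool =>
          σ (Sum.inl (x i 0)) || σ (Sum.inl (x i 1)) || σ (Sum.inr (some i))) ∪
      Set.range (fun i : I => fun σ : X ⊕ Option I → Bool =>
          σ (Sum.inl (x i 0)) || σ (Sum.inl (x i 2)) || σ (Sum.inr (some i))) ∪
      Set.range (fun i : I => fun σ : X ⊕ Option I → Bool =>
          σ (Sum.inl (x i 1)) || σ (Sum.inl (x i 2)) || σ (Sum.inr (some i))) ∪
      {fun σ : X ⊕ Option I → Bool =>
          decide (∃ i : I, σ (Sum.inl (x i 0)) = true ∧ σ (Sum.inl (x i 1)) = true ∧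
            σ (Sum.inl (x i 2)) = true) ||
          decide (∃ i : I, σ (Sum.inr (some i)) = true) || σ (Sum.inr none)}
    let A : Set (X ⊕ Option I) := {v | v ≠ Sum.inr none}
    (∃ a : X → Bool, ∀ i : I,
        (a (x i 0)).toNat + (a (x i 1)).toNat + (a (x i 2)).toNat = 2) ↔
      ∃ P N : Set (X ⊕ Option I),
        IsExplanation Γ A (fun σ => σ (Sum.inr none)) P N := by
  intro Γ A
  exact ⟨fun ⟨_, ha⟩ => exists_isExplanation_reductionKB x ha,
    fun ⟨_, _, hE⟩ => exactlyTwo_of_isExplanation_reductionKB x hE⟩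

/-- Reduction from 2-in-3-SAT to symmetric abduction with monotone knowledge base and a
positive literal manifestation. Variables are `Sum.inl x` for `x ∈ X`,
`Sum.inr (some i)` for `qᵢ` and `Sum.inr none` for `q`. -/
theorem stmt_6 (X : Type*) [Fintype X] (I : Type*) [Fintype I]
    (x : I → Fin 3 → X) (hx : ∀ i, Function.Injective (x i)) :
    let Γ : Set ((X ⊕ Option I → Bool) → Bool) :=
      Set.range (fun i : I => fun σ : X ⊕ Option I → Bool =>
          σ (Sum.inl (x i 0)) || σ (Sum.inl (x i 1)) || σ (Sum.inl (x i 2))) ∪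
      Set.range (fun i : I => fun σ : X ⊕ Option I → Bool =>
          σ (Sum.inl (x i 0)) || σ (Sum.inl (x i 1)) || σ (Sum.inr (some i))) ∪
      Set.range (fun i : I => fun σ : X ⊕ Option I → Bool =>
          σ (Sum.inl (x i 0)) || σ (Sum.inl (x i 2)) || σ (Sum.inr (some i))) ∪
      Set.range (fun i : I => fun σ : X ⊕ Option I → Bool =>
          σ (Sum.inl (x i 1)) || σ (Sum.inl (x i 2)) || σ (Sum.inr (some i))) ∪
      {fun σ : X ⊕ Option I → Bool =>
          decide (∃ i : I, σ (Sum.inl (x i 0)) = true ∧ σ (Sum.inl (x i 1)) = true ∧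
            σ (Sum.inl (x i 2)) = true) ||
          decide (∃ i : I, σ (Sum.inr (some i)) = true) || σ (Sum.inr none)}
    let A : Set (X ⊕ Option I) := {v | v ≠ Sum.inr none}
    (∃ a : X → Bool, ∀ i : I,
        (a (x i 0)).toNat + (a (x i 1)).toNat + (a (x i 2)).toNat = 2) ↔
      ∃ P N : Set (X ⊕ Option I),
        IsExplanation Γ A (fun σ => σ (Sum.inr none)) P N :=
  stmt_6_general X I x
end

section
/- Let φ = ⋀_{i ∈ I} cᵢ be a CNF over variables x₁, …, xₙ in which each clause cᵢ is a disjunction of exactly three literals over {x₁, …, xₙ}. Introduce fresh, pairwise distinct variables x'₁, …, x'ₙ and q₁, …, qₙ. For each clause cᵢ, let c̃ᵢ be the positive clause over {x₁, …, xₙ, x'₁, …, x'ₙ} obtained from cᵢ by replacing each negative literal ¬xⱼ with the variable x'ⱼ. Define Γ := { c̃ᵢ : i ∈ I } ∪ { σ ↦ σ xᵢ ∨ σ x'ᵢ, σ ↦ σ xᵢ ∨ σ qᵢ, σ ↦ σ x'ᵢ ∨ σ qᵢ : 1 ≤ i ≤ n }, A := {x₁, …, xₙ, x'₁, …, x'ₙ},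 and let the manifestation be the term t := σ ↦ ⋀_{i=1}^{n} σ qᵢ. Then φ is satisfiable if and only if (Γ, A, t) has an explanation. -/
section Abduction

variable {V : Type*} {Γ : Set ((V → Bool) → Bool)} {σ : V → Bool}

theorem satKB_union {Γ₁ Γ₂ : Set ((V → Bool) → Bool)} :
    SatKB (Γ₁ ∪ Γ₂) σ ↔ SatKB Γ₁ σ ∧ SatKB Γ₂ σ := by
  simp only [SatKB, Set.mem_union, or_imp, forall_and]

theorem satKB_range {ι : Type*} {f : ι → (V → Bool) → Bool} :
    SatKB (Set.range f) σ ↔ ∀ i, f i σ = true := by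
  simp only [SatKB, Set.forall_mem_range]

theorem satLits_setOf_iff_eqOn {A : Set V} {τ : V → Bool} :
    SatLits σ {v | v ∈ A ∧ τ v = true} {v | v ∈ A ∧ τ v = false} ↔ Set.EqOn σ τ A := by
  refine ⟨fun h v hv => ?_, fun h => ⟨fun v hv => ?_, fun v hv => ?_⟩⟩
  · cases hτ : τ v
    exacts [h.2 v ⟨hv, hτ⟩, h.1 v ⟨hv, hτ⟩]
  · rw [h hv.1, hv.2]
  · rw [h hv.1, hv.2]

theorem isExplanation_of_forall_eqOn {A : Set V} {φ : (V → Bool) → Bool} {τ : V → Bool}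
    (hτ : SatKB Γ τ) (hφ : ∀ σ, SatKB Γ σ → Set.EqOn σ τ A → φ σ = true) :
    IsExplanation Γ A φ {v | v ∈ A ∧ τ v = true} {v | v ∈ A ∧ τ v = false} := by
  refine ⟨fun v hv => hv.1, fun v hv => hv.1, ?_,
    ⟨τ, hτ, satLits_setOf_iff_eqOn.2 fun _ _ => rfl⟩,
    fun σ hσ hE => hφ σ hσ (satLits_setOf_iff_eqOn.1 hE)⟩
  rw [Set.disjoint_left]
  rintro v ⟨-, hv⟩ ⟨-, hv'⟩
  simp_all

theorem IsExplanation.exists_forall_eqOn {A : Set V} {φ : (V → Bool) → Bool} {P N : Set V}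
    (h : IsExplanation Γ A φ P N) :
    ∃ σ, SatKB Γ σ ∧ ∀ σ', SatKB Γ σ' → Set.EqOn σ' σ A → φ σ' = true := by
  obtain ⟨hP, hN, -, ⟨σ, hσ, hσE⟩, hφ⟩ := h
  refine ⟨σ, hσ, fun σ' hσ' hEq => hφ σ' hσ' ⟨fun v hv => ?_, fun v hv => ?_⟩⟩
  · rw [hEq (hP hv)]; exact hσE.1 v hv
  · rw [hEq (hN hv)]; exact hσE.2 v hv

end Abduction

theorem Bool.or3_eq_true_iff_exists_fin_three (f : Fin 3 → Bool) :
    (f 0 || f 1 || f 2) = true ↔ ∃ j, f j = true := by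
  simp [Fin.exists_fin_succ, or_assoc]

namespace ThreeSatReduction

/-- `Sum.inl i`, `Sum.inr (Sum.inl i)` and `Sum.inr (Sum.inr i)` stand for `xᵢ`, `x'ᵢ`, `qᵢ`. -/
abbrev Var (n : ℕ) := Fin n ⊕ Fin n ⊕ Fin n

variable {n : ℕ} {I : Type*}

def litVar (p : Fin n × Bool) : Var n :=
  if p.2 then Sum.inl p.1 else Sum.inr (Sum.inl p.1)

def reductionKB (c : I → Fin 3 → Fin n × Bool) : Set ((Var n → Bool) → Bool) :=
  Set.range (fun i : I => fun σ : Var n → Bool =>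
      σ (litVar (c i 0)) || σ (litVar (c i 1)) || σ (litVar (c i 2))) ∪
  Set.range (fun i : Fin n => fun σ : Var n → Bool =>
      σ (Sum.inl i) || σ (Sum.inr (Sum.inl i))) ∪
  Set.range (fun i : Fin n => fun σ : Var n → Bool =>
      σ (Sum.inl i) || σ (Sum.inr (Sum.inr i))) ∪
  Set.range (fun i : Fin n => fun σ : Var n → Bool =>
      σ (Sum.inr (Sum.inl i)) || σ (Sum.inr (Sum.inr i)))

def abducibles (n : ℕ) : Set (Var n) :=
  {v | ∃ i : Fin n, v = Sum.inl i ∨ v = Sum.inr (Sum.inl i)}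

def allQ (σ : Var n → Bool) : Bool :=
  decide (∀ i : Fin n, σ (Sum.inr (Sum.inr i)) = true)

variable {c : I → Fin 3 → Fin n × Bool} {σ : Var n → Bool}

theorem satKB_reductionKB_iff :
    SatKB (reductionKB c) σ ↔ (∀ i, ∃ j, σ (litVar (c i j)) = true) ∧
      (∀ k, (σ (Sum.inl k) || σ (Sum.inr (Sum.inl k))) = true) ∧
      (∀ k, (σ (Sum.inl k) || σ (Sum.inr (Sum.inr k))) = true) ∧
      (∀ k, (σ (Sum.inr (Sum.inl k)) || σ (Sum.inr (Sum.inr k))) = true) := by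
  simp only [reductionKB, satKB_union, satKB_range, ← Bool.or3_eq_true_iff_exists_fin_three,
    and_assoc]

def encode (a : Fin n → Bool) : Var n → Bool
  | Sum.inl k => a k
  | Sum.inr (Sum.inl k) => !a k
  | Sum.inr (Sum.inr _) => true

theorem encode_litVar (a : Fin n → Bool) (p : Fin n × Bool) :
    encode a (litVar p) = true ↔ a p.1 = p.2 := by
  obtain ⟨k, _ | _⟩ := p <;> simp [litVar, encode]

theorem satKB_encode {a : Fin n → Bool} (ha : ∀ i, ∃ j, a (c i j).1 = (c i j).2) :
    SatKB (reductionKB c) (encode a) := by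
  refine satKB_reductionKB_iff.2 ⟨fun i => ?_, fun k => ?_, fun k => ?_, fun k => ?_⟩
  · obtain ⟨j, hj⟩ := ha i
    exact ⟨j, (encode_litVar a _).2 hj⟩
  all_goals simp [encode]

theorem allQ_of_eqOn_encode {a : Fin n → Bool} (hσ : SatKB (reductionKB c) σ)
    (hEq : Set.EqOn σ (encode a) (abducibles n)) : allQ σ = true := by
  obtain ⟨-, -, hxq, hx'q⟩ := satKB_reductionKB_iff.1 hσ
  refine decide_eq_true fun k => ?_
  have hx : σ (Sum.inl k) = a k := hEq ⟨k, Or.inl rfl⟩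
  have hx' : σ (Sum.inr (Sum.inl k)) = !a k := hEq ⟨k, Or.inr rfl⟩
  cases hak : a k
  · simpa [hx, hak] using hxq k
  · simpa [hx', hak] using hx'q k

def repair (σ : Var n → Bool) : Var n → Bool
  | Sum.inr (Sum.inr k) => !(σ (Sum.inl k) && σ (Sum.inr (Sum.inl k)))
  | v => σ v

theorem eqOn_repair (σ : Var n → Bool) : Set.EqOn (repair σ) σ (abducibles n) := by
  rintro v ⟨k, rfl | rfl⟩ <;> rfl

theorem repair_litVar (σ : Var n → Bool) (p : Fin n × Bool) :
    repair σ (litVar p) = σ (litVar p) :=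
  eqOn_repair σ <| by obtain ⟨k, _ | _⟩ := p <;> simp [litVar, abducibles]

theorem satKB_repair (hσ : SatKB (reductionKB c) σ) : SatKB (reductionKB c) (repair σ) := by
  obtain ⟨hcl, hxx', -, -⟩ := satKB_reductionKB_iff.1 hσ
  refine satKB_reductionKB_iff.2 ⟨fun i => ?_, hxx', fun k => ?_, fun k => ?_⟩
  · simpa only [repair_litVar] using hcl i
  all_goals simp only [repair]; cases σ (Sum.inl k) <;> cases σ (Sum.inr (Sum.inl k)) <;> rfl

theorem and_eq_false_of_allQ_repair (h : allQ (repair σ) = true) (k : Fin n) :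
    (σ (Sum.inl k) && σ (Sum.inr (Sum.inl k))) = false := by
  have hq : repair σ (Sum.inr (Sum.inr k)) = true := of_decide_eq_true h k
  simpa only [repair, Bool.not_eq_true'] using hq

theorem cnf_sat_of_satKB_reductionKB (hσ : SatKB (reductionKB c) σ)
    (hx : ∀ k, (σ (Sum.inl k) && σ (Sum.inr (Sum.inl k))) = false) :
    ∀ i, ∃ j, σ (Sum.inl (c i j).1) = (c i j).2 := by
  intro i
  obtain ⟨j, hj⟩ := (satKB_reductionKB_iff.1 hσ).1 i
  refine ⟨j, ?_⟩
  generalize c i j = p at hj ⊢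
  obtain ⟨k, _ | _⟩ := p
  · have hx' : σ (Sum.inr (Sum.inl k)) = true := by simpa [litVar] using hj
    simpa [hx'] using hx k
  · simpa [litVar] using hj

end ThreeSatReduction

open ThreeSatReduction in
theorem stmt_7_general (n : ℕ) (I : Type*) (c : I → Fin 3 → Fin n × Bool) :
    let L : Fin n × Bool → Fin n ⊕ Fin n ⊕ Fin n := fun p =>
      if p.2 then Sum.inl p.1 else Sum.inr (Sum.inl p.1)
    let Γ : Set ((Fin n ⊕ Fin n ⊕ Fin n → Bool) → Bool) :=
      Set.range (fun i : I => fun σ : Fin n ⊕ Fin n ⊕ Fin n → Bool =>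
          σ (L (c i 0)) || σ (L (c i 1)) || σ (L (c i 2))) ∪
      Set.range (fun i : Fin n => fun σ : Fin n ⊕ Fin n ⊕ Fin n → Bool =>
          σ (Sum.inl i) || σ (Sum.inr (Sum.inl i))) ∪
      Set.range (fun i : Fin n => fun σ : Fin n ⊕ Fin n ⊕ Fin n → Bool =>
          σ (Sum.inl i) || σ (Sum.inr (Sum.inr i))) ∪
      Set.range (fun i : Fin n => fun σ : Fin n ⊕ Fin n ⊕ Fin n → Bool =>
          σ (Sum.inr (Sum.inl i)) || σ (Sum.inr (Sum.inr i)))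
    let A : Set (Fin n ⊕ Fin n ⊕ Fin n) :=
      {v | ∃ i : Fin n, v = Sum.inl i ∨ v = Sum.inr (Sum.inl i)}
    let t : (Fin n ⊕ Fin n ⊕ Fin n → Bool) → Bool := fun σ =>
      decide (∀ i : Fin n, σ (Sum.inr (Sum.inr i)) = true)
    (∃ a : Fin n → Bool, ∀ i : I, ∃ j : Fin 3, a (c i j).1 = (c i j).2) ↔
      ∃ P N : Set (Fin n ⊕ Fin n ⊕ Fin n), IsExplanation Γ A t P N := by
  intro L Γ A t
  change (∃ a : Fin n → Bool, ∀ i, ∃ j, a (c i j).1 = (c i j).2) ↔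
    ∃ P N, IsExplanation (reductionKB c) (abducibles n) allQ P N
  constructor
  · rintro ⟨a, ha⟩
    exact ⟨_, _, isExplanation_of_forall_eqOn (satKB_encode ha)
      fun _ => allQ_of_eqOn_encode⟩
  · rintro ⟨P, N, hE⟩
    obtain ⟨σ, hσ, hφ⟩ := hE.exists_forall_eqOn
    have hq := hφ _ (satKB_repair hσ) (eqOn_repair σ)
    exact ⟨fun k => σ (Sum.inl k), cnf_sat_of_satKB_reductionKB hσ (and_eq_false_of_allQ_repair hq)⟩

/-- Reduction from 3-SAT to symmetric abduction over disjunctions of variables with a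
positive term manifestation. Variables: `Sum.inl i` is `xᵢ`, `Sum.inr (Sum.inl i)` is
`x'ᵢ` and `Sum.inr (Sum.inr i)` is `qᵢ`. A literal is a pair (variable, polarity); it is
replaced by the positive variable `xᵢ` if positive and by `x'ᵢ` if negative. -/
theorem stmt_7 (n : ℕ) (I : Type*) [Fintype I] (c : I → Fin 3 → Fin n × Bool) :
    let L : Fin n × Bool → Fin n ⊕ Fin n ⊕ Fin n := fun p =>
      if p.2 then Sum.inl p.1 else Sum.inr (Sum.inl p.1)
    let Γ : Set ((Fin n ⊕ Fin n ⊕ Fin n → Bool) → Bool) :=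
      Set.range (fun i : I => fun σ : Fin n ⊕ Fin n ⊕ Fin n → Bool =>
          σ (L (c i 0)) || σ (L (c i 1)) || σ (L (c i 2))) ∪
      Set.range (fun i : Fin n => fun σ : Fin n ⊕ Fin n ⊕ Fin n → Bool =>
          σ (Sum.inl i) || σ (Sum.inr (Sum.inl i))) ∪
      Set.range (fun i : Fin n => fun σ : Fin n ⊕ Fin n ⊕ Fin n → Bool =>
          σ (Sum.inl i) || σ (Sum.inr (Sum.inr i))) ∪
      Set.range (fun i : Fin n => fun σ : Fin n ⊕ Fin n ⊕ Fin n → Bool =>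
          σ (Sum.inr (Sum.inl i)) || σ (Sum.inr (Sum.inr i)))
    let A : Set (Fin n ⊕ Fin n ⊕ Fin n) :=
      {v | ∃ i : Fin n, v = Sum.inl i ∨ v = Sum.inr (Sum.inl i)}
    let t : (Fin n ⊕ Fin n ⊕ Fin n → Bool) → Bool := fun σ =>
      decide (∀ i : Fin n, σ (Sum.inr (Sum.inr i)) = true)
    (∃ a : Fin n → Bool, ∀ i : I, ∃ j : Fin 3, a (c i j).1 = (c i j).2) ↔
      ∃ P N : Set (Fin n ⊕ Fin n ⊕ Fin n), IsExplanation Γ A t P N :=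
  stmt_7_general n I c
end

section
/- Let φ be a 3-DNF over variables {x₁, …, xₙ} ∪ {y₁, …, yₘ}: φ = ⋁_{k ∈ K} (l_{k1} ∧ l_{k2} ∧ l_{k3}) with K finite and each l_{kj} a literal. Introduce fresh, pairwise distinct variables x'₁, …, x'ₙ, y'₁, …, y'ₘ, f₁, …, fₙ, t₁, …, tₙ and q, and set V equal to the union of all these variables. For each k ∈ K, let c'ₖ be the positive clause in which a literal xᵢ of the k-th term contributes x'ᵢ, a literal ¬xᵢ contributes xᵢ, a literal yⱼ contributes y'ⱼ, and a literal ¬yⱼ contributes yⱼ. Define Γ := { c'ₖ ∨ q : k ∈ K } ∪ { σ ↦ σ xᵢ ∨ σ x'ᵢ : 1 ≤ i ≤ n } ∪ { σ ↦ σ yⱼ ∨ σ y'ⱼ : 1 ≤ j ≤ m } ∪ { σ ↦ σ fᵢ ∨ σ xᵢ, σ ↦ σ tᵢ ∨ σ x'ᵢ, σ ↦ σ fᵢ ∨ σ tᵢ : 1 ≤ i ≤ n }, A := { tᵢ, fᵢ : 1 ≤ i ≤ n }, and ψ := σ ↦ σ q ∨ ⋁_{i=1}^{n} (σ xᵢ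 ∧ σ x'ᵢ) ∨ ⋁_{j=1}^{m} (σ yⱼ ∧ σ y'ⱼ). Then there exists a : {x₁, …, xₙ} → Bool such that φ evaluates to true under every assignment extending a to {y₁, …, yₘ}, if and only if (Γ, A, ψ) has an explanation. -/
/-- The variable set for the reduction from `QSAT₂`: the variables
`xᵢ, x'ᵢ, yⱼ, y'ⱼ, fᵢ, tᵢ` and `q`. -/
inductive Var8 (n m : ℕ) where
  | x (i : Fin n)
  | x' (i : Fin n)
  | y (j : Fin m)
  | y' (j : Fin m)
  | f (i : Fin n)
  | t (i : Fin n)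
  | q

/-- A literal over `{x₁,…,xₙ} ∪ {y₁,…,yₘ}` (a pair of a variable and a polarity)
contributes the indicated positive variable to the clause `c'ₖ`. -/
def litVar8 {n m : ℕ} : (Fin n ⊕ Fin m) × Bool → Var8 n m
  | (Sum.inl i, true) => Var8.x' i
  | (Sum.inl i, false) => Var8.x i
  | (Sum.inr j, true) => Var8.y' j
  | (Sum.inr j, false) => Var8.y j

/-!
Read `x'ᵢ, y'ⱼ` as the negations of `xᵢ, yⱼ`. Under such a dual-rail assignment the clause
`c'ₖ ∨ q` says that the `k`-th term fails or `q` holds, and `ψ` fails exactly when `q` is false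
and the assignment is dual rail. The literals `¬fᵢ, tᵢ` (resp. `fᵢ, ¬tᵢ`) force `xᵢ` (resp.
`x'ᵢ`) through `Γ`, so they encode a guess `a` for the `x`-variables, and `Γ ∧ E` entails `ψ`
iff no `b` makes every term fail under `(a, b)`. Conversely, an explanation yields the guess
`aᵢ := (tᵢ is not negated)`: satisfiability of `Γ ∧ E` forbids negating both `tᵢ` and `fᵢ`, so
from a `b` making every term fail one builds a model of `Γ ∧ E` falsifying `ψ`.
-/

namespace Var8

variable {n m : ℕ} {K : Type*}

def assign (a : Fin n → Bool) (b : Fin m → Bool) (t f : Fin n → Bool) (q : Bool) :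
    Var8 n m → Bool
  | .x i => a i
  | .x' i => !a i
  | .y j => b j
  | .y' j => !b j
  | .f i => f i
  | .t i => t i
  | .q => q

def IsDualRail (σ : Var8 n m → Bool) : Prop :=
  (∀ i, σ (.x' i) = !σ (.x i)) ∧ ∀ j, σ (.y' j) = !σ (.y j)

def restrictXY (σ : Var8 n m → Bool) : Fin n ⊕ Fin m → Bool :=
  Sum.elim (fun i => σ (.x i)) (fun j => σ (.y j))

theorem isDualRail_assign (a : Fin n → Bool) (b : Fin m → Bool) (t f : Fin n → Bool)
    (q : Bool) : IsDualRail (assign a b t f q) :=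
  ⟨fun _ => rfl, fun _ => rfl⟩

theorem restrictXY_assign (a : Fin n → Bool) (b : Fin m → Bool) (t f : Fin n → Bool) (q : Bool) :
    restrictXY (assign a b t f q) = Sum.elim a b := by
  funext v
  cases v <;> rfl

theorem litVar8_eq_true_iff {σ : Var8 n m → Bool} (hσ : IsDualRail σ)
    (l : (Fin n ⊕ Fin m) × Bool) : σ (litVar8 l) = true ↔ restrictXY σ l.1 ≠ l.2 := by
  rcases l with ⟨i | j, _ | _⟩ <;> simp [litVar8, restrictXY, hσ.1, hσ.2]

def termClause (T : K → Fin 3 → (Fin n ⊕ Fin m) × Bool) (k : K) (σ : Var8 n m → Bool) :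
    Bool :=
  σ (litVar8 (T k 0)) || σ (litVar8 (T k 1)) || σ (litVar8 (T k 2)) || σ .q

theorem termClause_eq_true_iff {σ : Var8 n m → Bool} (hσ : IsDualRail σ)
    (T : K → Fin 3 → (Fin n ⊕ Fin m) × Bool) (k : K) :
    termClause T k σ = true ↔ σ .q = true ∨ ∃ j, restrictXY σ (T k j).1 ≠ (T k j).2 := by
  simp only [termClause, Bool.or_eq_true, Fin.exists_fin_succ, Fin.exists_fin_zero,
    ← litVar8_eq_true_iff hσ]
  tauto

def qsatKB (T : K → Fin 3 → (Fin n ⊕ Fin m) × Bool) : Set ((Var8 n m → Bool) → Bool) :=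
  Set.range (termClause T) ∪
  Set.range (fun i : Fin n => fun σ : Var8 n m → Bool => σ (.x i) || σ (.x' i)) ∪
  Set.range (fun j : Fin m => fun σ : Var8 n m → Bool => σ (.y j) || σ (.y' j)) ∪
  Set.range (fun i : Fin n => fun σ : Var8 n m → Bool => σ (.f i) || σ (.x i)) ∪
  Set.range (fun i : Fin n => fun σ : Var8 n m → Bool => σ (.t i) || σ (.x' i)) ∪
  Set.range (fun i : Fin n => fun σ : Var8 n m → Bool => σ (.f i) || σ (.t i))

theorem satKB_qsatKB_iff {T : K → Fin 3 → (Fin n ⊕ Fin m) × Bool} {σ : Var8 n m → Bool} :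
    SatKB (qsatKB T) σ ↔
      (∀ k, termClause T k σ = true) ∧ (∀ i, (σ (.x i) || σ (.x' i)) = true) ∧
      (∀ j, (σ (.y j) || σ (.y' j)) = true) ∧ (∀ i, (σ (.f i) || σ (.x i)) = true) ∧
      (∀ i, (σ (.t i) || σ (.x' i)) = true) ∧ (∀ i, (σ (.f i) || σ (.t i)) = true) := by
  simp only [SatKB, qsatKB, Set.mem_union, or_imp, forall_and, Set.forall_mem_range, and_assoc]

def abducibles : Set (Var8 n m) := {v | ∃ i : Fin n, v = .t i ∨ v = .f i}

def manifestation (σ : Var8 n m → Bool) : Bool :=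
  σ .q || decide (∃ i : Fin n, σ (.x i) = true ∧ σ (.x' i) = true) ||
    decide (∃ j : Fin m, σ (.y j) = true ∧ σ (.y' j) = true)

theorem isDualRail_of_manifestation_eq_false {T : K → Fin 3 → (Fin n ⊕ Fin m) × Bool}
    {σ : Var8 n m → Bool} (hΓ : SatKB (qsatKB T) σ) (hψ : manifestation σ = false) :
    IsDualRail σ := by
  obtain ⟨-, hx, hy, -⟩ := satKB_qsatKB_iff.1 hΓ
  simp only [manifestation, Bool.or_eq_false_iff, decide_eq_false_iff_not, not_exists] at hψ
  obtain ⟨⟨-, hxx⟩, hyy⟩ := hψ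
  refine ⟨fun i => ?_, fun j => ?_⟩
  · have h₁ := hx i; have h₂ := hxx i; revert h₁ h₂
    cases σ (.x i) <;> cases σ (.x' i) <;> simp
  · have h₁ := hy j; have h₂ := hyy j; revert h₁ h₂
    cases σ (.y j) <;> cases σ (.y' j) <;> simp

def guessLits (a : Fin n → Bool) : Set (Var8 n m) :=
  Set.range fun i => if a i then .t i else .f i

theorem satLits_guessLits_iff {σ : Var8 n m → Bool} {a : Fin n → Bool} :
    SatLits σ (guessLits a) (guessLits fun i => !a i) ↔
      ∀ i, σ (.t i) = a i ∧ σ (.f i) = !a i := by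
  simp only [SatLits, guessLits, Set.forall_mem_range, ← forall_and]
  refine forall_congr' fun i => ?_
  obtain h | h := Bool.eq_false_or_eq_true (a i) <;> simp [h, and_comm]

theorem manifestation_eq_true_of_forall_exists_term {T : K → Fin 3 → (Fin n ⊕ Fin m) × Bool}
    {a : Fin n → Bool}
    (ha : ∀ b : Fin m → Bool, ∃ k, ∀ j, Sum.elim a b (T k j).1 = (T k j).2)
    {σ : Var8 n m → Bool} (hΓ : SatKB (qsatKB T) σ)
    (htf : ∀ i, σ (.t i) = a i ∧ σ (.f i) = !a i) : manifestation σ = true := by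
  by_contra hψ
  rw [Bool.not_eq_true] at hψ
  have hσ := isDualRail_of_manifestation_eq_false hΓ hψ
  obtain ⟨hterm, -, -, hfx, htx', -⟩ := satKB_qsatKB_iff.1 hΓ
  have hx : ∀ i, σ (.x i) = a i := fun i => by
    have := hfx i; have := htx' i
    cases h : a i <;> simp_all [hσ.1 i]
  have hbase : restrictXY σ = Sum.elim a fun j => σ (.y j) := by
    funext v
    cases v <;> simp [restrictXY, hx]
  obtain ⟨k, hk⟩ := ha fun j => σ (.y j)
  rcases (termClause_eq_true_iff hσ T k).1 (hterm k) with hq | ⟨j, hj⟩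
  · simp [manifestation, hq] at hψ
  · exact hj (hbase ▸ hk j)

theorem isExplanation_guessLits {T : K → Fin 3 → (Fin n ⊕ Fin m) × Bool} {a : Fin n → Bool}
    (ha : ∀ b : Fin m → Bool, ∃ k, ∀ j, Sum.elim a b (T k j).1 = (T k j).2) :
    IsExplanation (qsatKB T) abducibles manifestation (guessLits a)
      (guessLits fun i => !a i) := by
  have guessLits_subset (a : Fin n → Bool) : guessLits a ⊆ (abducibles : Set (Var8 n m)) := by
    rintro _ ⟨i, rfl⟩
    exact ⟨i, by cases a i <;> simp⟩
  refine ⟨guessLits_subset _, guessLits_subset _, ?_, ⟨assign a (fun _ => true) a (! a ·) true,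
    ?_, satLits_guessLits_iff.2 fun _ => ⟨rfl, rfl⟩⟩,
    fun _ hΓ hlits =>
      manifestation_eq_true_of_forall_exists_term ha hΓ (satLits_guessLits_iff.1 hlits)⟩
  · rw [Set.disjoint_left]
    rintro _ ⟨i, rfl⟩ ⟨i', h⟩
    cases hi : a i <;> cases hi' : a i' <;> simp_all
  · refine satKB_qsatKB_iff.2 ⟨fun k => ?_, ?_, ?_, ?_, ?_, ?_⟩ <;>
      simp [termClause, assign]

theorem satLits_of_eq_true_iff_not_mem {V : Type*} {P N A : Set V} {σ : V → Bool}
    (hPA : P ⊆ A) (hNA : N ⊆ A) (hPN : Disjoint P N) (hσ : ∀ v ∈ A, σ v = true ↔ v ∉ N) :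
    SatLits σ P N :=
  ⟨fun v hv => (hσ v (hPA hv)).2 (Set.disjoint_left.1 hPN hv),
    fun v hv => Bool.eq_false_iff.2 fun h => (hσ v (hNA hv)).1 h hv⟩

theorem exists_forall_exists_term_of_isExplanation
    {T : K → Fin 3 → (Fin n ⊕ Fin m) × Bool} {P N : Set (Var8 n m)}
    (h : IsExplanation (qsatKB T) abducibles manifestation P N) :
    ∃ a : Fin n → Bool, ∀ b : Fin m → Bool, ∃ k, ∀ j, Sum.elim a b (T k j).1 = (T k j).2 := by
  classical
  obtain ⟨hPA, hNA, hPN, ⟨σ₀, hΓ₀, hσ₀⟩, hent⟩ := h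
  have hft : ∀ i, .t i ∈ N → .f i ∉ N := fun i ht hf => by
    have := (satKB_qsatKB_iff.1 hΓ₀).2.2.2.2.2 i
    simp [hσ₀.2 _ ht, hσ₀.2 _ hf] at this
  set a : Fin n → Bool := fun i => decide (.t i ∉ N)
  refine ⟨a, fun b => ?_⟩
  by_contra! hb
  set σ := assign a b a (fun i => decide (.f i ∉ N)) false
  have hΓ : SatKB (qsatKB T) σ := by
    refine satKB_qsatKB_iff.2 ⟨fun k => ?_, fun i => ?_, fun j => ?_, fun i => ?_, fun i => ?_,
      fun i => ?_⟩
    · rw [termClause_eq_true_iff (isDualRail_assign ..), restrictXY_assign]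
      exact .inr (hb k)
    · simp [σ, assign]
    · simp [σ, assign]
    · by_cases ht : Var8.t i ∈ N
      · simp [σ, assign, a, ht, hft i ht]
      · simp [σ, assign, a, ht]
    · simp [σ, assign]
    · by_cases ht : Var8.t i ∈ N
      · simp [σ, assign, hft i ht]
      · simp [σ, assign, a, ht]
  have hlits : SatLits σ P N :=
    satLits_of_eq_true_iff_not_mem hPA hNA hPN fun v ⟨i, hv⟩ => by
      rcases hv with rfl | rfl <;> simp [σ, assign, a]
  simpa [σ, manifestation, assign] using hent σ hΓ hlits

end Var8

theorem stmt_8_general (n m : ℕ) (K : Type*)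
    (T : K → Fin 3 → (Fin n ⊕ Fin m) × Bool) :
    let Γ : Set ((Var8 n m → Bool) → Bool) :=
      Set.range (fun k : K => fun σ : Var8 n m → Bool =>
          σ (litVar8 (T k 0)) || σ (litVar8 (T k 1)) || σ (litVar8 (T k 2)) || σ Var8.q) ∪
      Set.range (fun i : Fin n => fun σ : Var8 n m → Bool =>
          σ (Var8.x i) || σ (Var8.x' i)) ∪
      Set.range (fun j : Fin m => fun σ : Var8 n m → Bool =>
          σ (Var8.y j) || σ (Var8.y' j)) ∪
      Set.range (fun i : Fin n => fun σ : Var8 n m → Bool =>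
          σ (Var8.f i) || σ (Var8.x i)) ∪
      Set.range (fun i : Fin n => fun σ : Var8 n m → Bool =>
          σ (Var8.t i) || σ (Var8.x' i)) ∪
      Set.range (fun i : Fin n => fun σ : Var8 n m → Bool =>
          σ (Var8.f i) || σ (Var8.t i))
    let A : Set (Var8 n m) := {v | ∃ i : Fin n, v = Var8.t i ∨ v = Var8.f i}
    let ψ : (Var8 n m → Bool) → Bool := fun σ =>
      σ Var8.q || decide (∃ i : Fin n, σ (Var8.x i) = true ∧ σ (Var8.x' i) = true) ||
        decide (∃ j : Fin m, σ (Var8.y j) = true ∧ σ (Var8.y' j) = true)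
    (∃ a : Fin n → Bool, ∀ b : Fin m → Bool,
        ∃ k : K, ∀ j : Fin 3, Sum.elim a b (T k j).1 = (T k j).2) ↔
      ∃ P N : Set (Var8 n m), IsExplanation Γ A ψ P N := by
  intro Γ A ψ
  exact ⟨fun ⟨_, ha⟩ => ⟨_, _, Var8.isExplanation_guessLits ha⟩,
    fun ⟨_, _, h⟩ => Var8.exists_forall_exists_term_of_isExplanation h⟩

/-- Reduction from `QSAT₂` (with a 3-DNF matrix given by its terms `T k`) to symmetric
abduction with a formula manifestation. -/
theorem stmt_8 (n m : ℕ) (K : Type*) [Fintype K]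
    (T : K → Fin 3 → (Fin n ⊕ Fin m) × Bool) :
    let Γ : Set ((Var8 n m → Bool) → Bool) :=
      Set.range (fun k : K => fun σ : Var8 n m → Bool =>
          σ (litVar8 (T k 0)) || σ (litVar8 (T k 1)) || σ (litVar8 (T k 2)) || σ Var8.q) ∪
      Set.range (fun i : Fin n => fun σ : Var8 n m → Bool =>
          σ (Var8.x i) || σ (Var8.x' i)) ∪
      Set.range (fun j : Fin m => fun σ : Var8 n m → Bool =>
          σ (Var8.y j) || σ (Var8.y' j)) ∪
      Set.range (fun i : Fin n => fun σ : Var8 n m → Bool =>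
          σ (Var8.f i) || σ (Var8.x i)) ∪
      Set.range (fun i : Fin n => fun σ : Var8 n m → Bool =>
          σ (Var8.t i) || σ (Var8.x' i)) ∪
      Set.range (fun i : Fin n => fun σ : Var8 n m → Bool =>
          σ (Var8.f i) || σ (Var8.t i))
    let A : Set (Var8 n m) := {v | ∃ i : Fin n, v = Var8.t i ∨ v = Var8.f i}
    let ψ : (Var8 n m → Bool) → Bool := fun σ =>
      σ Var8.q || decide (∃ i : Fin n, σ (Var8.x i) = true ∧ σ (Var8.x' i) = true) ||
        decide (∃ j : Fin m, σ (Var8.y j) = true ∧ σ (Var8.y' j) = true)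
    (∃ a : Fin n → Bool, ∀ b : Fin m → Bool,
        ∃ k : K, ∀ j : Fin 3, Sum.elim a b (T k j).1 = (T k j).2) ↔
      ∃ P N : Set (Var8 n m), IsExplanation Γ A ψ P N :=
  stmt_8_general n m K T
end

section
/- Let Γ be a knowledge base over V in which every formula γ ∈ Γ is monotone, let A ⊆ V and let φ be any formula. Then (Γ, A, φ) has a positive explanation if and only if A itself is a positive explanation, i.e., if and only if Γ ∧ A is satisfiable and every assignment satisfying Γ ∧ A satisfies φ (where Γ ∧ A means Γ together with the positive literals of all variables in A). -/
/-- `E` is a positive explanation for the abduction instance `(Γ, A, φ)`: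
a subset of `A` such that `Γ ∧ E` is satisfiable and entails `φ`. -/
def IsPosExplanation {V : Type*} (Γ : Set ((V → Bool) → Bool)) (A : Set V)
    (φ : (V → Bool) → Bool) (E : Set V) : Prop :=
  E ⊆ A ∧ (∃ σ, SatKB Γ σ ∧ ∀ x ∈ E, σ x = true) ∧
    (∀ σ, SatKB Γ σ → (∀ x ∈ E, σ x = true) → φ σ = true)

/-!
Setting variables to `true` preserves every monotone formula, so any model of `Γ` can be raised
to a model of `Γ ∧ A`; and adding positive literals only strengthens what `Γ ∧ E` entails.
-/

section Monotone

variable {V : Type*} {Γ : Set ((V → Bool) → Bool)}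

theorem SatKB.mono (hmono : ∀ γ ∈ Γ, Monotone γ) {σ τ : V → Bool} (hστ : σ ≤ τ)
    (hσ : SatKB Γ σ) : SatKB Γ τ := fun γ hγ =>
  top_le_iff.mp ((hσ γ hγ).symm.trans_le (hmono γ hγ hστ))

theorem SatKB.exists_true_on (hmono : ∀ γ ∈ Γ, Monotone γ) {σ : V → Bool} (hσ : SatKB Γ σ)
    (A : Set V) : ∃ τ, SatKB Γ τ ∧ ∀ x ∈ A, τ x = true := by
  classical
  refine ⟨σ ⊔ fun v => decide (v ∈ A), hσ.mono hmono le_sup_left, fun x hx => ?_⟩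
  simp [hx]

theorem IsPosExplanation.self (hmono : ∀ γ ∈ Γ, Monotone γ) {A E : Set V}
    {φ : (V → Bool) → Bool} (hE : IsPosExplanation Γ A φ E) : IsPosExplanation Γ A φ A := by
  obtain ⟨hEA, ⟨σ, hσ, -⟩, hentails⟩ := hE
  exact ⟨subset_rfl, hσ.exists_true_on hmono A,
    fun τ hτ hτA => hentails τ hτ fun x hx => hτA x (hEA hx)⟩

end Monotone

theorem isPosExplanation_self_iff {V : Type*} {Γ : Set ((V → Bool) → Bool)} {A : Set V}
    {φ : (V → Bool) → Bool} :
    IsPosExplanation Γ A φ A ↔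
      (∃ σ, SatKB Γ σ ∧ ∀ x ∈ A, σ x = true) ∧
        ∀ σ, SatKB Γ σ → (∀ x ∈ A, σ x = true) → φ σ = true :=
  and_iff_right subset_rfl

theorem stmt_9_general (V : Type*) (Γ : Set ((V → Bool) → Bool))
    (hmono : ∀ γ ∈ Γ, ∀ σ τ : V → Bool, (∀ v, σ v ≤ τ v) → γ σ ≤ γ τ)
    (A : Set V) (φ : (V → Bool) → Bool) :
    ((∃ E : Set V, IsPosExplanation Γ A φ E) ↔ IsPosExplanation Γ A φ A) ∧
    (IsPosExplanation Γ A φ A ↔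
      ((∃ σ, SatKB Γ σ ∧ ∀ x ∈ A, σ x = true) ∧
        (∀ σ, SatKB Γ σ → (∀ x ∈ A, σ x = true) → φ σ = true))) :=
  ⟨⟨fun ⟨_, hE⟩ => hE.self hmono, fun hA => ⟨A, hA⟩⟩, isPosExplanation_self_iff⟩

/-- For a monotone knowledge base, `(Γ, A, φ)` has a positive explanation iff `A` itself
is one, i.e. iff `Γ ∧ A` is satisfiable and entails `φ`. -/
theorem stmt_9 (V : Type*) (Γ : Set ((V → Bool) → Bool)) (hΓfin : Γ.Finite)
    (hmono : ∀ γ ∈ Γ, ∀ σ τ : V → Bool, (∀ v, σ v ≤ τ v) → γ σ ≤ γ τ)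
    (A : Set V) (φ : (V → Bool) → Bool) :
    ((∃ E : Set V, IsPosExplanation Γ A φ E) ↔ IsPosExplanation Γ A φ A) ∧
    (IsPosExplanation Γ A φ A ↔
      ((∃ σ, SatKB Γ σ ∧ ∀ x ∈ A, σ x = true) ∧
        (∀ σ, SatKB Γ σ → (∀ x ∈ A, σ x = true) → φ σ = true))) :=
  stmt_9_general V Γ hmono A φ
end

section
/- Let φ = ⋁_{k ∈ K} (l_{k1} ∧ l_{k2} ∧ l_{k3}) be a 3-DNF over variables {x₁, …, xₙ}, with K finite and each l_{kj} a literal over {x₁, …, xₙ}. Over V := {x₁, …, xₙ} ∪ {x'₁, …, x'ₙ} ∪ {q}, for each k ∈ K let c'ₖ be the positive clause in which a literal xᵢ of the k-th term contributes x'ᵢ and a literal ¬xᵢ contributes xᵢ. Define Γ := { c'ₖ ∨ q : k ∈ K } ∪ { σ ↦ σ xᵢ ∨ σ x'ᵢ : 1 ≤ i ≤ n } and ψ := σ ↦ σ q ∨ ⋁_{i=1}^{n} (σ xᵢ ∧ σ x'ᵢ). Then for every assignment σ on V: σ satisfies Γ and σ does not satisfy ψ if and only if σ q = false, σ x'ᵢ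 = ¬ σ xᵢ for all 1 ≤ i ≤ n, and φ evaluates to false under the assignment xᵢ ↦ σ xᵢ. In other words, Γ ∧ ¬ψ is logically equivalent to ¬φ ∧ ¬q ∧ ⋀_{i=1}^{n} (xᵢ ⊕ x'ᵢ). -/
open Sum

theorem Bool.or_eq_true_and_not_and_iff_eq_not {a b : Bool} :
    ((a || b) = true ∧ ¬(a = true ∧ b = true)) ↔ b = !a := by
  cases a <;> cases b <;> decide

theorem satKB_union_range_iff {V K ι : Type*} (f : K → (V → Bool) → Bool)
    (g : ι → (V → Bool) → Bool) (σ : V → Bool) :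
    SatKB (Set.range f ∪ Set.range g) σ ↔ (∀ k, f k σ = true) ∧ ∀ i, g i σ = true := by
  simp [SatKB, or_imp, forall_and]

/-- Under an assignment with `x'ᵢ = ¬ xᵢ`, this variable is true exactly when the
literal `p` is false. -/
def negLitVar {ι : Type*} (p : ι × Bool) : ι ⊕ ι ⊕ Unit :=
  if p.2 then inr (inl p.1) else inl p.1

theorem apply_negLitVar {ι : Type*} {σ : ι ⊕ ι ⊕ Unit → Bool}
    (hσ : ∀ i, σ (inr (inl i)) = !σ (inl i)) (p : ι × Bool) :
    σ (negLitVar p) = !decide (σ (inl p.1) = p.2) := by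
  obtain ⟨i, _ | _⟩ := p <;> cases h : σ (inl i) <;> simp [negLitVar, hσ, h]

theorem clause_negLitVar_eq_not_term {ι : Type*} {σ : ι ⊕ ι ⊕ Unit → Bool}
    (hσ : ∀ i, σ (inr (inl i)) = !σ (inl i)) (t : Fin 3 → ι × Bool) :
    (σ (negLitVar (t 0)) || σ (negLitVar (t 1)) || σ (negLitVar (t 2))) =
      !decide (∀ j, σ (inl (t j).1) = (t j).2) := by
  simp [apply_negLitVar hσ, Fin.forall_fin_succ, Bool.or_assoc]

/-- Variables: `Sum.inl i` is `xᵢ`, `Sum.inr (Sum.inl i)` is `x'ᵢ`, `Sum.inr (Sum.inr ())`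
is `q`; the 3-DNF `φ` is given by its terms `T k`, each a triple of literals (pairs of a
variable and a polarity). -/
theorem stmt_12_general (n : ℕ) (K : Type*) (T : K → Fin 3 → Fin n × Bool) :
    let L : Fin n × Bool → Fin n ⊕ Fin n ⊕ Unit := fun p =>
      if p.2 then Sum.inr (Sum.inl p.1) else Sum.inl p.1
    let q : Fin n ⊕ Fin n ⊕ Unit := Sum.inr (Sum.inr ())
    let Γ : Set ((Fin n ⊕ Fin n ⊕ Unit → Bool) → Bool) :=
      Set.range (fun k : K => fun σ : Fin n ⊕ Fin n ⊕ Unit → Bool =>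
          σ (L (T k 0)) || σ (L (T k 1)) || σ (L (T k 2)) || σ q) ∪
      Set.range (fun i : Fin n => fun σ : Fin n ⊕ Fin n ⊕ Unit → Bool =>
          σ (Sum.inl i) || σ (Sum.inr (Sum.inl i)))
    let ψ : (Fin n ⊕ Fin n ⊕ Unit → Bool) → Bool := fun σ =>
      σ q || decide (∃ i : Fin n, σ (Sum.inl i) = true ∧ σ (Sum.inr (Sum.inl i)) = true)
    ∀ σ : Fin n ⊕ Fin n ⊕ Unit → Bool,
      (SatKB Γ σ ∧ ψ σ = false) ↔
        (σ q = false ∧ (∀ i : Fin n, σ (Sum.inr (Sum.inl i)) = !σ (Sum.inl i)) ∧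
          ¬ ∃ k : K, ∀ j : Fin 3, σ (Sum.inl (T k j).1) = (T k j).2) := by
  intro L q Γ ψ σ
  have hL : ∀ p, L p = negLitVar p := fun _ => rfl
  simp only [Γ, ψ, hL, satKB_union_range_iff, Bool.or_eq_false_iff, decide_eq_false_iff_not,
    not_exists]
  constructor
  · rintro ⟨⟨hclause, hpair⟩, hq, hnboth⟩
    have hσ : ∀ i, σ (inr (inl i)) = !σ (inl i) := fun i =>
      Bool.or_eq_true_and_not_and_iff_eq_not.1 ⟨hpair i, hnboth i⟩
    refine ⟨hq, hσ, fun k hk => ?_⟩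
    simpa [hq, clause_negLitVar_eq_not_term hσ, hk] using hclause k
  · rintro ⟨hq, hσ, hφ⟩
    have hpair i := Bool.or_eq_true_and_not_and_iff_eq_not.2 (hσ i)
    refine ⟨⟨fun k => ?_, fun i => (hpair i).1⟩, hq, fun i => (hpair i).2⟩
    simpa [hq, clause_negLitVar_eq_not_term hσ] using hφ k

/-- For the reduction from 3-DNF tautology: `Γ ∧ ¬ψ` is logically equivalent to
`¬φ ∧ ¬q ∧ ⋀ᵢ (xᵢ ⊕ x'ᵢ)`. Variables: `Sum.inl i` is `xᵢ`, `Sum.inr (Sum.inl i)` is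
`x'ᵢ`, `Sum.inr (Sum.inr ())` is `q`; the 3-DNF `φ` is given by its terms `T k`, each a
triple of literals (pairs of a variable and a polarity). -/
theorem stmt_12 (n : ℕ) (K : Type*) [Fintype K] (T : K → Fin 3 → Fin n × Bool) :
    let L : Fin n × Bool → Fin n ⊕ Fin n ⊕ Unit := fun p =>
      if p.2 then Sum.inr (Sum.inl p.1) else Sum.inl p.1
    let q : Fin n ⊕ Fin n ⊕ Unit := Sum.inr (Sum.inr ())
    let Γ : Set ((Fin n ⊕ Fin n ⊕ Unit → Bool) → Bool) :=
      Set.range (fun k : K => fun σ : Fin n ⊕ Fin n ⊕ Unit → Bool =>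
          σ (L (T k 0)) || σ (L (T k 1)) || σ (L (T k 2)) || σ q) ∪
      Set.range (fun i : Fin n => fun σ : Fin n ⊕ Fin n ⊕ Unit → Bool =>
          σ (Sum.inl i) || σ (Sum.inr (Sum.inl i)))
    let ψ : (Fin n ⊕ Fin n ⊕ Unit → Bool) → Bool := fun σ =>
      σ q || decide (∃ i : Fin n, σ (Sum.inl i) = true ∧ σ (Sum.inr (Sum.inl i)) = true)
    ∀ σ : Fin n ⊕ Fin n ⊕ Unit → Bool,
      (SatKB Γ σ ∧ ψ σ = false) ↔
        (σ q = false ∧ (∀ i : Fin n, σ (Sum.inr (Sum.inl i)) = !σ (Sum.inl i)) ∧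
          ¬ ∃ k : K, ∀ j : Fin 3, σ (Sum.inl (T k j).1) = (T k j).2) :=
  stmt_12_general n K T
end

section
/- Let φ = ⋁_{k ∈ K} (l_{k1} ∧ l_{k2} ∧ l_{k3}) be a 3-DNF over variables {x₁, …, xₙ}, with K finite and each l_{kj} a literal over {x₁, …, xₙ}. Over V := {x₁, …, xₙ} ∪ {x'₁, …, x'ₙ} ∪ {q}, for each k ∈ K let c'ₖ be the positive clause in which a literal xᵢ of the k-th term contributes x'ᵢ and a literal ¬xᵢ contributes xᵢ. Define Γ := { c'ₖ ∨ q : k ∈ K } ∪ { σ ↦ σ xᵢ ∨ σ x'ᵢ : 1 ≤ i ≤ n } and ψ := σ ↦ σ q ∨ ⋁_{i=1}^{n} (σ xᵢ ∧ σ x'ᵢ). Then φ is a tautology (φ evaluates to true under every assignment of x₁, …, xₙ) if and only if (Γ, ∅, ψ) has an explanation, equivalently, if and only if Γ is satisfiable and Γ ⊨ ψ. -/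
namespace DNFTautologyReduction

variable {X K : Type*}

def clauseVar (l : X × Bool) : X ⊕ X ⊕ Unit :=
  if l.2 then Sum.inr (Sum.inl l.1) else Sum.inl l.1

def kb (T : K → Fin 3 → X × Bool) : Set ((X ⊕ X ⊕ Unit → Bool) → Bool) :=
  Set.range (fun k σ => σ (clauseVar (T k 0)) || σ (clauseVar (T k 1)) ||
      σ (clauseVar (T k 2)) || σ (Sum.inr (Sum.inr ()))) ∪
    Set.range (fun i σ => σ (Sum.inl i) || σ (Sum.inr (Sum.inl i)))

open Classical in
noncomputable def manifestation (σ : X ⊕ X ⊕ Unit → Bool) : Bool :=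
  σ (Sum.inr (Sum.inr ())) ||
    decide (∃ i, σ (Sum.inl i) = true ∧ σ (Sum.inr (Sum.inl i)) = true)

def extend (a : X → Bool) : X ⊕ X ⊕ Unit → Bool :=
  Sum.elim a (Sum.elim (fun i => !a i) fun _ => false)

theorem satKB_kb_true (T : K → Fin 3 → X × Bool) : SatKB (kb T) fun _ => true := by
  rintro γ (⟨k, rfl⟩ | ⟨i, rfl⟩) <;> simp

theorem extend_clauseVar (a : X → Bool) (l : X × Bool) :
    extend a (clauseVar l) = (a l.1 != l.2) := by
  obtain ⟨i, _ | _⟩ := l <;> simp [extend, clauseVar]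

theorem manifestation_extend (a : X → Bool) : manifestation (extend a) = false := by
  simp [manifestation, extend]

theorem satKB_extend_iff (T : K → Fin 3 → X × Bool) (a : X → Bool) :
    SatKB (kb T) (extend a) ↔ ∀ k, ∃ j, a (T k j).1 ≠ (T k j).2 := by
  simp only [SatKB, kb, Set.mem_union, or_imp, forall_and, Set.forall_mem_range,
    extend_clauseVar]
  simp [extend, Fin.exists_fin_succ, or_assoc]

/-- The clauses `xᵢ ∨ x'ᵢ` together with the failure of the manifestation force `x'ᵢ = ¬ xᵢ`. -/
theorem eq_extend_of_satKB {T : K → Fin 3 → X × Bool} {σ : X ⊕ X ⊕ Unit → Bool}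
    (hσ : SatKB (kb T) σ) (hψ : manifestation σ = false) : σ = extend (σ ∘ Sum.inl) := by
  simp only [manifestation, Bool.or_eq_false_iff, decide_eq_false_iff_not, not_exists,
    not_and] at hψ
  funext v
  rcases v with i | i | ⟨⟩
  · rfl
  · have hpair := hσ _ (Or.inr ⟨i, rfl⟩)
    have hnotboth := hψ.2 i
    cases h : σ (Sum.inl i) <;> simp_all [extend]
  · exact hψ.1

theorem exists_countermodel_iff (T : K → Fin 3 → X × Bool) :
    (∃ σ, SatKB (kb T) σ ∧ manifestation σ = false) ↔
      ∃ a : X → Bool, ∀ k, ∃ j, a (T k j).1 ≠ (T k j).2 := by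
  constructor
  · rintro ⟨σ, hσ, hψ⟩
    rw [eq_extend_of_satKB hσ hψ, satKB_extend_iff] at hσ
    exact ⟨_, hσ⟩
  · rintro ⟨a, ha⟩
    exact ⟨extend a, (satKB_extend_iff T a).2 ha, manifestation_extend a⟩

theorem entails_iff_tautology (T : K → Fin 3 → X × Bool) :
    (∀ σ, SatKB (kb T) σ → manifestation σ = true) ↔
      ∀ a : X → Bool, ∃ k, ∀ j, a (T k j).1 = (T k j).2 := by
  simpa using not_congr (exists_countermodel_iff T)

end DNFTautologyReduction

open DNFTautologyReduction in
theorem stmt_13_general (n : ℕ) (K : Type*) (T : K → Fin 3 → Fin n × Bool) :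
    let L : Fin n × Bool → Fin n ⊕ Fin n ⊕ Unit := fun p =>
      if p.2 then Sum.inr (Sum.inl p.1) else Sum.inl p.1
    let q : Fin n ⊕ Fin n ⊕ Unit := Sum.inr (Sum.inr ())
    let Γ : Set ((Fin n ⊕ Fin n ⊕ Unit → Bool) → Bool) :=
      Set.range (fun k : K => fun σ : Fin n ⊕ Fin n ⊕ Unit → Bool =>
          σ (L (T k 0)) || σ (L (T k 1)) || σ (L (T k 2)) || σ q) ∪
      Set.range (fun i : Fin n => fun σ : Fin n ⊕ Fin n ⊕ Unit → Bool =>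
          σ (Sum.inl i) || σ (Sum.inr (Sum.inl i)))
    let ψ : (Fin n ⊕ Fin n ⊕ Unit → Bool) → Bool := fun σ =>
      σ q || decide (∃ i : Fin n, σ (Sum.inl i) = true ∧ σ (Sum.inr (Sum.inl i)) = true)
    ((∀ a : Fin n → Bool, ∃ k : K, ∀ j : Fin 3, a (T k j).1 = (T k j).2) ↔
        ∃ P N : Set (Fin n ⊕ Fin n ⊕ Unit), IsExplanation Γ ∅ ψ P N) ∧
    ((∀ a : Fin n → Bool, ∃ k : K, ∀ j : Fin 3, a (T k j).1 = (T k j).2) ↔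
        ((∃ σ, SatKB Γ σ) ∧ ∀ σ, SatKB Γ σ → ψ σ = true)) := by
  intro L q Γ ψ
  have hΓ : Γ = kb T := rfl
  have hψ : ψ = manifestation := by
    funext σ
    simp only [ψ, q, manifestation]
    -- the two sides differ only in the `Decidable` instance of the existential
    congr
  rw [hΓ, hψ, exists_isExplanation_empty_iff, and_self, entails_iff_tautology]
  exact ⟨fun h => ⟨⟨_, satKB_kb_true T⟩, h⟩, And.right⟩

/-- Reduction from 3-DNF tautology to positive abduction with a monotone knowledge base
and a formula manifestation. Variables: `Sum.inl i` is `xᵢ`, `Sum.inr (Sum.inl i)` is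
`x'ᵢ`, `Sum.inr (Sum.inr ())` is `q`; the 3-DNF `φ` is given by its terms `T k`, each a
triple of literals (pairs of a variable and a polarity). -/
theorem stmt_13 (n : ℕ) (K : Type*) [Fintype K] (T : K → Fin 3 → Fin n × Bool) :
    let L : Fin n × Bool → Fin n ⊕ Fin n ⊕ Unit := fun p =>
      if p.2 then Sum.inr (Sum.inl p.1) else Sum.inl p.1
    let q : Fin n ⊕ Fin n ⊕ Unit := Sum.inr (Sum.inr ())
    let Γ : Set ((Fin n ⊕ Fin n ⊕ Unit → Bool) → Bool) :=
      Set.range (fun k : K => fun σ : Fin n ⊕ Fin n ⊕ Unit → Bool =>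
          σ (L (T k 0)) || σ (L (T k 1)) || σ (L (T k 2)) || σ q) ∪
      Set.range (fun i : Fin n => fun σ : Fin n ⊕ Fin n ⊕ Unit → Bool =>
          σ (Sum.inl i) || σ (Sum.inr (Sum.inl i)))
    let ψ : (Fin n ⊕ Fin n ⊕ Unit → Bool) → Bool := fun σ =>
      σ q || decide (∃ i : Fin n, σ (Sum.inl i) = true ∧ σ (Sum.inr (Sum.inl i)) = true)
    ((∀ a : Fin n → Bool, ∃ k : K, ∀ j : Fin 3, a (T k j).1 = (T k j).2) ↔
        ∃ P N : Set (Fin n ⊕ Fin n ⊕ Unit), IsExplanation Γ ∅ ψ P N) ∧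
    ((∀ a : Fin n → Bool, ∃ k : K, ∀ j : Fin 3, a (T k j).1 = (T k j).2) ↔
        ((∃ σ, SatKB Γ σ) ∧ ∀ σ, SatKB Γ σ → ψ σ = true)) :=
  stmt_13_general n K T
end

section
/- Let φ : (Fin n → Bool) → (Fin m → Bool) → Bool be a Boolean function. Over the finite variable set V := {xᵢ, x'ᵢ, rᵢ : 1 ≤ i ≤ n} ∪ {y₁, …, yₘ} ∪ {t, q}, define the knowledge base Γ := { σ ↦ ¬σ xᵢ ∨ σ rᵢ, σ ↦ ¬σ x'ᵢ ∨ σ rᵢ, σ ↦ ¬σ xᵢ ∨ ¬σ x'ᵢ : 1 ≤ i ≤ n } ∪ { σ ↦ ¬(φ (σ ∘ x) (σ ∘ y)) ∨ σ t } ∪ { σ ↦ ¬(⋀_{i=1}^{n} σ rᵢ ∧ σ t) ∨ σ q }, and A := {xᵢ, x'ᵢ : 1 ≤ i ≤ n}. Then the number of assignments a : Fin n → Bool such that φ a b = true for all b : Fin m → Bool equals the number of full explanations of (Γ, A, q). -/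
/-- The variable set for the counting reduction: `xᵢ, x'ᵢ, rᵢ, yⱼ, t, q`. -/
inductive Var14 (n m : ℕ) where
  | x (i : Fin n)
  | x' (i : Fin n)
  | r (i : Fin n)
  | y (j : Fin m)
  | t
  | q

/-!
A full explanation over the abducibles `xᵢ, x'ᵢ` is the same as a truth assignment `τ` to them
such that `Γ ∧ τ` is satisfiable and entails `q`. The clause `¬xᵢ ∨ ¬x'ᵢ` forbids making both
`xᵢ` and `x'ᵢ` true, and making both false leaves `rᵢ` free to be false, hence `q` free to be
false; so `τ` must be `xᵢ ↦ aᵢ, x'ᵢ ↦ ¬aᵢ` for some `a`. Such a `τ` entails `q` iff `φ a b` holds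
for every `b`, since a `b` with `φ a b = false` lets `t`, and with it `q`, be false.
-/

open Function Set

section FullExplanation

variable {V α : Type*} {Γ : Set ((V → Bool) → Bool)} {φ : (V → Bool) → Bool} {ι : α → V}

/-- A full explanation over `range ι`, recorded as the truth values it gives the abducibles. -/
def IsFullExplanationFun (Γ : Set ((V → Bool) → Bool)) (ι : α → V) (φ : (V → Bool) → Bool)
    (τ : α → Bool) : Prop :=
  (∃ σ, SatKB Γ σ ∧ σ ∘ ι = τ) ∧ ∀ σ, SatKB Γ σ → σ ∘ ι = τ → φ σ = true

lemma satLits_image_iff_s14 (σ : V → Bool) (τ : α → Bool) :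
    SatLits σ (ι '' {a | τ a = true}) (ι '' {a | τ a = false}) ↔ σ ∘ ι = τ := by
  simp only [SatLits, forall_mem_image, mem_ofPred_eq, funext_iff, comp_apply,
    ← forall_and]
  refine forall_congr' fun a => ?_
  cases τ a <;> simp

lemma isExplanation_image_iff (hι : Injective ι) (τ : α → Bool) :
    IsExplanation Γ (range ι) φ (ι '' {a | τ a = true}) (ι '' {a | τ a = false}) ↔
      IsFullExplanationFun Γ ι φ τ := by
  have hdisj : Disjoint (ι '' {a | τ a = true}) (ι '' {a | τ a = false}) :=
    (disjoint_image_iff hι).2 (disjoint_left.2 fun a h h' => by simp_all)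
  simp only [IsExplanation, IsFullExplanationFun, satLits_image_iff_s14, image_subset_range,
    hdisj, true_and]

lemma image_union_image_eq_range (τ : α → Bool) :
    ι '' {a | τ a = true} ∪ ι '' {a | τ a = false} = range ι := by
  rw [← image_union, ← image_univ]
  congr 1
  ext a
  cases τ a <;> simp

lemma exists_eq_image_of_union_eq_range {P N : Set V} (hPN : P ∪ N = range ι)
    (hdisj : Disjoint P N) :
    ∃ τ : α → Bool, P = ι '' {a | τ a = true} ∧ N = ι '' {a | τ a = false} := by
  classical
  refine ⟨fun a => decide (ι a ∈ P), ?_, ?_⟩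
  · ext v
    constructor
    · intro hv
      obtain ⟨a, rfl⟩ : v ∈ range ι := hPN ▸ Or.inl hv
      exact ⟨a, by simpa using hv, rfl⟩
    · rintro ⟨a, ha, rfl⟩
      simpa using ha
  · ext v
    constructor
    · intro hv
      obtain ⟨a, rfl⟩ : v ∈ range ι := hPN ▸ Or.inr hv
      exact ⟨a, by simpa using disjoint_right.1 hdisj hv, rfl⟩
    · rintro ⟨a, ha, rfl⟩
      exact (hPN ▸ mem_range_self a : ι a ∈ P ∪ N).resolve_left (by simpa using ha)

theorem card_fullExplanations_eq (hι : Injective ι) :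
    Nat.card {E : Set V × Set V // IsExplanation Γ (range ι) φ E.1 E.2 ∧ E.1 ∪ E.2 = range ι} =
      Nat.card {τ : α → Bool // IsFullExplanationFun Γ ι φ τ} := by
  symm
  refine Nat.card_eq_of_bijective
    (fun τ => ⟨(ι '' {a | τ.1 a = true}, ι '' {a | τ.1 a = false}),
      (isExplanation_image_iff hι τ.1).2 τ.2, image_union_image_eq_range τ.1⟩) ⟨?_, ?_⟩
  · intro τ₁ τ₂ h
    have hP := congrArg (fun E => E.1.1) h
    simp only [(image_injective.2 hι).eq_iff] at hP
    ext a
    simpa using congrArg (a ∈ ·) hP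
  · rintro ⟨⟨P, N⟩, hE, hPN⟩
    obtain ⟨τ, rfl, rfl⟩ := exists_eq_image_of_union_eq_range hPN hE.2.2.1
    exact ⟨⟨τ, (isExplanation_image_iff hι τ).1 hE⟩, rfl⟩

end FullExplanation

namespace Var14

variable {n m : ℕ}

def abducible : Fin n ⊕ Fin n → Var14 n m := Sum.elim x x'

lemma abducible_injective : Injective (abducible : Fin n ⊕ Fin n → Var14 n m) := by
  rintro (i | i) (j | j) h <;> simp_all [abducible]

lemma range_abducible :
    range (abducible : Fin n ⊕ Fin n → Var14 n m) = {v | ∃ i, v = x i ∨ v = x' i} := by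
  ext v
  simp [abducible, eq_comm, exists_or]

def reductionKB (φ : (Fin n → Bool) → (Fin m → Bool) → Bool) : Set ((Var14 n m → Bool) → Bool) :=
  range (fun i σ => !σ (x i) || σ (r i)) ∪
  range (fun i σ => !σ (x' i) || σ (r i)) ∪
  range (fun i σ => !σ (x i) || !σ (x' i)) ∪
  {fun σ => !(φ (fun i => σ (x i)) (fun j => σ (y j))) || σ t} ∪
  {fun σ => !(decide (∀ i, σ (r i) = true) && σ t) || σ q}

variable {φ : (Fin n → Bool) → (Fin m → Bool) → Bool}

lemma satKB_reductionKB_iff {σ : Var14 n m → Bool} :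
    SatKB (reductionKB φ) σ ↔
      (∀ i, σ (x i) = true → σ (r i) = true) ∧ (∀ i, σ (x' i) = true → σ (r i) = true) ∧
      (∀ i, σ (x i) = true → σ (x' i) = false) ∧
      (φ (σ ∘ x) (σ ∘ y) = true → σ t = true) ∧
      ((∀ i, σ (r i) = true) → σ t = true → σ q = true) := by
  simp only [SatKB, reductionKB, mem_union, or_imp, forall_and, forall_mem_range,
    mem_singleton_iff, forall_eq]
  simp [imp_iff_not_or, comp_def, or_assoc, and_assoc]

def mk (a a' ρ : Fin n → Bool) (b : Fin m → Bool) (τt τq : Bool) : Var14 n m → Bool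
  | x i => a i
  | x' i => a' i
  | r i => ρ i
  | y j => b j
  | t => τt
  | q => τq

lemma comp_abducible_eq_iff {σ : Var14 n m → Bool} {a a' : Fin n → Bool} :
    σ ∘ abducible = Sum.elim a a' ↔ σ ∘ x = a ∧ σ ∘ x' = a' := by
  simp [funext_iff, Sum.forall, abducible]

lemma satKB_mk_of_forall_true (a : Fin n → Bool) (b : Fin m → Bool) :
    SatKB (reductionKB φ) (mk a (!a ·) (fun _ => true) b true true) := by
  simp [satKB_reductionKB_iff, mk]

lemma satKB_mk_of_both_false {a a' : Fin n → Bool} (hex : ∀ j, a j = true → a' j = false)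
    {i : Fin n} (hi : a i = false) (hi' : a' i = false) (b : Fin m → Bool) :
    SatKB (reductionKB φ) (mk a a' (fun j => decide (j ≠ i)) b true false) := by
  refine satKB_reductionKB_iff.2
    ⟨?_, ?_, hex, fun _ => rfl, fun h => absurd (h i) (by simp [mk])⟩ <;>
  · intro j hj
    simp only [mk, decide_eq_true_eq]
    rintro rfl
    simp_all [mk]

lemma satKB_mk_of_eval_false {a a' : Fin n → Bool} (hex : ∀ j, a j = true → a' j = false)
    {b : Fin m → Bool} (hb : φ a b = false) :
    SatKB (reductionKB φ) (mk a a' (fun _ => true) b false false) :=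
  satKB_reductionKB_iff.2 ⟨fun _ _ => rfl, fun _ _ => rfl, hex, by simpa [mk, comp_def] using hb,
    fun _ h => h⟩

lemma eval_q_of_satKB {a : Fin n → Bool} (ha : ∀ b, φ a b = true) {σ : Var14 n m → Bool}
    (hσ : SatKB (reductionKB φ) σ) (hx : σ ∘ x = a) (hx' : σ ∘ x' = (!a ·)) : σ q = true := by
  obtain ⟨hxr, hx'r, -, hφt, hrtq⟩ := satKB_reductionKB_iff.1 hσ
  have hr : ∀ i, σ (r i) = true := fun i => by
    cases h : a i
    · exact hx'r i (by simpa [h] using congrFun hx' i)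
    · exact hxr i (by simpa [h] using congrFun hx i)
  exact hrtq hr (hφt (hx ▸ ha _))

theorem isFullExplanationFun_reductionKB_iff (a a' : Fin n → Bool) :
    IsFullExplanationFun (reductionKB φ) abducible (· q) (Sum.elim a a') ↔
      a' = (!a ·) ∧ ∀ b, φ a b = true := by
  simp only [IsFullExplanationFun, comp_abducible_eq_iff]
  constructor
  · rintro ⟨⟨σ, hσ, rfl, rfl⟩, hent⟩
    have hex := (satKB_reductionKB_iff.1 hσ).2.2.1
    refine ⟨funext fun i => ?_, fun b => ?_⟩
    · cases hi : σ (x i)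
      · by_contra hi'
        simpa [mk] using hent _ (satKB_mk_of_both_false hex hi (by simpa [hi] using hi') (σ ∘ y))
          ⟨rfl, rfl⟩
      · simpa [hi] using hex i hi
    · by_contra hb
      simpa [mk] using hent _ (satKB_mk_of_eval_false hex (Bool.not_eq_true _ ▸ hb)) ⟨rfl, rfl⟩
  · rintro ⟨rfl, ha⟩
    exact ⟨⟨_, satKB_mk_of_forall_true a (fun _ => false), rfl, rfl⟩,
      fun σ hσ ⟨hx, hx'⟩ => eval_q_of_satKB ha hσ hx hx'⟩

theorem card_forall_eq_card_isFullExplanationFun :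
    Nat.card {a : Fin n → Bool // ∀ b, φ a b = true} =
      Nat.card {τ // IsFullExplanationFun (reductionKB φ) abducible (· q) τ} := by
  refine Nat.card_eq_of_bijective (fun a => ⟨Sum.elim a.1 (!a.1 ·),
    (isFullExplanationFun_reductionKB_iff _ _).2 ⟨rfl, a.2⟩⟩) ⟨fun a₁ a₂ h => ?_, ?_⟩
  · exact Subtype.ext (congrArg (fun τ : Subtype _ => τ.1 ∘ Sum.inl) h)
  · rintro ⟨τ, hτ⟩
    rw [← Sum.elim_comp_inl_inr τ, isFullExplanationFun_reductionKB_iff] at hτ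
    obtain ⟨hinr, ha⟩ := hτ
    exact ⟨⟨τ ∘ Sum.inl, ha⟩, Subtype.ext (by simp only [← hinr]; exact Sum.elim_comp_inl_inr τ)⟩

end Var14

/-- The number of assignments `a` to `x₁,…,xₙ` such that `φ a b` holds for all
assignments `b` to `y₁,…,yₘ` equals the number of full explanations of `(Γ, A, q)`. -/
theorem stmt_14 (n m : ℕ) (φ : (Fin n → Bool) → (Fin m → Bool) → Bool) :
    let Γ : Set ((Var14 n m → Bool) → Bool) :=
      Set.range (fun i : Fin n => fun σ : Var14 n m → Bool =>
          !σ (Var14.x i) || σ (Var14.r i)) ∪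
      Set.range (fun i : Fin n => fun σ : Var14 n m → Bool =>
          !σ (Var14.x' i) || σ (Var14.r i)) ∪
      Set.range (fun i : Fin n => fun σ : Var14 n m → Bool =>
          !σ (Var14.x i) || !σ (Var14.x' i)) ∪
      {fun σ : Var14 n m → Bool =>
          !(φ (fun i => σ (Var14.x i)) (fun j => σ (Var14.y j))) || σ Var14.t} ∪
      {fun σ : Var14 n m → Bool =>
          !(decide (∀ i : Fin n, σ (Var14.r i) = true) && σ Var14.t) || σ Var14.q}
    let A : Set (Var14 n m) := {v | ∃ i : Fin n, v = Var14.x i ∨ v = Var14.x' i}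
    Nat.card {a : Fin n → Bool // ∀ b : Fin m → Bool, φ a b = true} =
      Nat.card {E : Set (Var14 n m) × Set (Var14 n m) //
        IsExplanation Γ A (fun σ => σ Var14.q) E.1 E.2 ∧ E.1 ∪ E.2 = A} := by
  intro Γ A
  rw [show A = range Var14.abducible from Var14.range_abducible.symm,
    card_fullExplanations_eq Var14.abducible_injective]
  exact Var14.card_forall_eq_card_isFullExplanationFun
end

section
/- Let X = {x₁, …, xₙ} be a finite set of n variables, let I be a finite index set, and let φ = ⋀_{i ∈ I} (pᵢ ∨ qᵢ) be a positive 2-CNF with pᵢ, qᵢ ∈ X for all i ∈ I. Let q ∉ X be fresh, set V := X ∪ {q}, Γ := { σ ↦ σ pᵢ ∨ σ qᵢ ∨ σ q : i ∈ I }, and A := X. Then the number of assignments a : X → Bool satisfying φ equals 2ⁿ minus the number of full explanations of (Γ, A, q). -/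
namespace FreshAbduction

open scoped Classical

variable {X I : Type*}

/-- The fresh manifestation variable is `none : Option X`. -/
def kbOrFresh (c : I → (X → Bool) → Bool) : Set ((Option X → Bool) → Bool) :=
  Set.range fun i σ => c i (σ ∘ some) || σ none

def litsOf (a : X → Bool) : Set (Option X) × Set (Option X) :=
  (some '' {x | a x = true}, some '' {x | a x = false})

theorem satLits_litsOf_iff (σ : Option X → Bool) (a : X → Bool) :
    SatLits σ (litsOf a).1 (litsOf a).2 ↔ σ ∘ some = a := by
  simp only [SatLits, litsOf, Set.forall_mem_image, Set.mem_ofPred_eq, funext_iff,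
    Function.comp_apply]
  refine ⟨fun ⟨hT, hF⟩ x => ?_,
    fun h => ⟨fun x hx => (h x).trans hx, fun x hx => (h x).trans hx⟩⟩
  cases hx : a x
  exacts [hF hx, hT hx]

theorem satKB_kbOrFresh_iff (c : I → (X → Bool) → Bool) (σ : Option X → Bool) :
    SatKB (kbOrFresh c) σ ↔ ∀ i, (c i (σ ∘ some) || σ none) = true := by
  simp [SatKB, kbOrFresh]

theorem isExplanation_litsOf_iff (c : I → (X → Bool) → Bool) (a : X → Bool) :
    IsExplanation (kbOrFresh c) {v | v ≠ none} (fun σ => σ none) (litsOf a).1 (litsOf a).2 ↔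
      ¬ ∀ i, c i a = true := by
  have hsub (s : Set X) : some '' s ⊆ {v | v ≠ none} := by rintro _ ⟨x, -, rfl⟩; simp
  have hdisj : Disjoint (litsOf a).1 (litsOf a).2 := by
    simp only [litsOf, Set.disjoint_image_iff (Option.some_injective X)]
    exact Set.disjoint_left.2 fun x (hT : a x = true) (hF : a x = false) => by simp_all
  -- with `σ ∘ some = a` fixed, `σ none` is the only remaining choice
  have hconsistent : ∃ σ, SatKB (kbOrFresh c) σ ∧ SatLits σ (litsOf a).1 (litsOf a).2 :=
    ⟨fun v => v.elim true a, by simp [satKB_kbOrFresh_iff], (satLits_litsOf_iff _ a).2 rfl⟩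
  have hentails : (∀ σ, SatKB (kbOrFresh c) σ → SatLits σ (litsOf a).1 (litsOf a).2 →
      σ none = true) ↔ ¬ ∀ i, c i a = true := by
    simp only [satLits_litsOf_iff]
    constructor
    · intro hent hsat
      have := hent (fun v => v.elim false a)
        ((satKB_kbOrFresh_iff c _).2 fun i => by rw [Bool.or_eq_true]; exact .inl (hsat i)) rfl
      simp at this
    · rintro hunsat σ hσ rfl
      obtain ⟨i, hi⟩ := not_forall.1 hunsat
      simpa [hi] using (satKB_kbOrFresh_iff c σ).1 hσ i
  exact ⟨fun h => hentails.1 h.2.2.2.2,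
    fun h => ⟨hsub _, hsub _, hdisj, hconsistent, hentails.2 h⟩⟩

theorem eq_litsOf_of_partition {P N : Set (Option X)} (hN : N ⊆ {v | v ≠ none})
    (hPN : Disjoint P N) (hunion : P ∪ N = {v | v ≠ none}) :
    (P, N) = litsOf (fun x => decide (some x ∈ P)) := by
  have hP : P ⊆ {v | v ≠ none} := hunion ▸ Set.subset_union_left
  refine Prod.ext (Set.ext fun v => ?_) (Set.ext fun v => ?_)
  · cases v with
    | none => simpa [litsOf] using fun h => hP h rfl
    | some x => simp [litsOf]
  · cases v with
    | none => simpa [litsOf] using fun h => hN h rfl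
    | some x =>
      have hx : some x ∈ P ∨ some x ∈ N := by
        rw [← Set.mem_union, hunion]
        exact Option.some_ne_none x
      have := fun h : some x ∈ P => Set.disjoint_left.1 hPN h
      simp only [litsOf, (Option.some_injective X).mem_set_image, Set.mem_ofPred_eq,
        decide_eq_false_iff_not]
      tauto

noncomputable def fullExplanationEquiv (c : I → (X → Bool) → Bool) :
    {E : Set (Option X) × Set (Option X) //
        IsExplanation (kbOrFresh c) {v | v ≠ none} (fun σ => σ none) E.1 E.2 ∧
          E.1 ∪ E.2 = {v | v ≠ none}} ≃
      {a : X → Bool // ¬ ∀ i, c i a = true} where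
  toFun E := ⟨fun x => decide (some x ∈ E.1.1), by
    obtain ⟨⟨P, N⟩, hexp, hunion⟩ := E
    rw [← isExplanation_litsOf_iff, ← eq_litsOf_of_partition hexp.2.1 hexp.2.2.1 hunion]
    exact hexp⟩
  invFun a := ⟨litsOf a, (isExplanation_litsOf_iff c a).2 a.2, by
    ext (_ | x) <;> simp [litsOf]⟩
  left_inv E := by
    obtain ⟨⟨P, N⟩, hexp, hunion⟩ := E
    exact Subtype.ext (eq_litsOf_of_partition hexp.2.1 hexp.2.2.1 hunion).symm
  right_inv a := Subtype.ext <| funext fun x => by cases h : a.1 x <;> simp [litsOf, h]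

theorem card_sat_eq_two_pow_sub_card_fullExplanations [Fintype X]
    (c : I → (X → Bool) → Bool) :
    Nat.card {a : X → Bool // ∀ i, c i a = true} =
      2 ^ Fintype.card X - Nat.card {E : Set (Option X) × Set (Option X) //
        IsExplanation (kbOrFresh c) {v | v ≠ none} (fun σ => σ none) E.1 E.2 ∧
          E.1 ∪ E.2 = {v | v ≠ none}} := by
  rw [Nat.card_congr (fullExplanationEquiv c), Nat.card_eq_fintype_card,
    Nat.card_eq_fintype_card, Fintype.card_subtype_compl, Fintype.card_fun, Fintype.card_bool,
    Nat.sub_sub_self (by simpa using Fintype.card_subtype_le fun a : X → Bool => ∀ i, c i a)]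

end FreshAbduction

theorem stmt_15_general (n : ℕ) (I : Type*) (p q : I → Fin n) :
    let Γ : Set ((Option (Fin n) → Bool) → Bool) :=
      Set.range (fun i : I => fun σ : Option (Fin n) → Bool =>
        σ (some (p i)) || σ (some (q i)) || σ none)
    let A : Set (Option (Fin n)) := {v | v ≠ none}
    Nat.card {a : Fin n → Bool // ∀ i : I, (a (p i) || a (q i)) = true} =
      2 ^ n - Nat.card {E : Set (Option (Fin n)) × Set (Option (Fin n)) //
        IsExplanation Γ A (fun σ => σ none) E.1 E.2 ∧ E.1 ∪ E.2 = A} := by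
  have h := FreshAbduction.card_sat_eq_two_pow_sub_card_fullExplanations
    fun i (a : Fin n → Bool) => a (p i) || a (q i)
  rwa [Fintype.card_fin] at h

/-- The number of satisfying assignments of a positive 2-CNF `⋀ᵢ (pᵢ ∨ qᵢ)` over `n`
variables equals `2 ^ n` minus the number of full explanations of `(Γ, A, q)`, where
`Γ = { pᵢ ∨ qᵢ ∨ q : i ∈ I }`, `A` is the set of all original variables and the fresh
variable `q` is modelled as `none : Option (Fin n)`. -/
theorem stmt_15 (n : ℕ) (I : Type*) [Fintype I] (p q : I → Fin n) :
    let Γ : Set ((Option (Fin n) → Bool) → Bool) :=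
      Set.range (fun i : I => fun σ : Option (Fin n) → Bool =>
        σ (some (p i)) || σ (some (q i)) || σ none)
    let A : Set (Option (Fin n)) := {v | v ≠ none}
    Nat.card {a : Fin n → Bool // ∀ i : I, (a (p i) || a (q i)) = true} =
      2 ^ n - Nat.card {E : Set (Option (Fin n)) × Set (Option (Fin n)) //
        IsExplanation Γ A (fun σ => σ none) E.1 E.2 ∧ E.1 ∪ E.2 = A} :=
  stmt_15_general n I p q
end
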